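/- arXiv:1505.01452 — 11 statements merged into one kernel-verified Lean document; each statement's English description precedes it below -/
import Mathlib

section
/- For all masses m₁, m₂ > 0 and every distance d > 0 there exists a unique pair (d₁, d₂) of real numbers with d₁ > 0, d₂ > 0, d₁ + d₂ = d, and m₁·sinh(2d₁) = m₂·sinh(2d₂). (This shows the hyperbolic center of mass of two masses is well and uniquely defined.) -/
/-!
With `d₂ = d - d₁`, the balance `m₁ sinh (2 d₁) - m₂ sinh (2 (d - d₁))` is strictly increasing
in `d₁`, negative at `0` and positive at `d`, so it vanishes at exactly one point of `(0, d)`.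
-/

open Real Set

theorem existsUnique_zero_of_strictMonoOn {f : ℝ → ℝ} {a b : ℝ} (hab : a ≤ b)
    (hf : StrictMonoOn f (Icc a b)) (hc : ContinuousOn f (Icc a b)) (ha : f a < 0)
    (hb : 0 < f b) : ∃! x, x ∈ Ioo a b ∧ f x = 0 := by
  obtain ⟨x, hx, hfx⟩ := intermediate_value_Ioo hab hc ⟨ha, hb⟩
  refine ⟨x, ⟨hx, hfx⟩, fun y ⟨hy, hfy⟩ => ?_⟩
  exact hf.injOn (Ioo_subset_Icc_self hy) (Ioo_subset_Icc_self hx) (hfy.trans hfx.symm)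

theorem strictMono_mul_sinh_two_mul_sub {m₁ m₂ : ℝ} (d : ℝ) (hm₁ : 0 < m₁) (hm₂ : 0 ≤ m₂) :
    StrictMono fun x => m₁ * sinh (2 * x) - m₂ * sinh (2 * (d - x)) := by
  have hinc : StrictMono fun x => m₁ * sinh (2 * x) :=
    (sinh_strictMono.comp (strictMono_mul_left_of_pos two_pos)).const_mul hm₁
  have hdec : Antitone fun x => m₂ * sinh (2 * (d - x)) := fun x y hxy =>
    mul_le_mul_of_nonneg_left (sinh_le_sinh.2 (by linarith)) hm₂
  simpa only [sub_eq_add_neg] using hinc.add_monotone hdec.neg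

/-- For masses `m₁, m₂ > 0` and any distance `d > 0` there is a unique
pair `(d₁, d₂)` with `d₁, d₂ > 0`, `d₁ + d₂ = d` and `m₁ sinh(2 d₁) = m₂ sinh(2 d₂)`:
the hyperbolic center of mass is well and uniquely defined. -/
theorem hyperbolic_center_of_mass_exists_unique
    (m₁ m₂ d : ℝ) (hm₁ : 0 < m₁) (hm₂ : 0 < m₂) (hd : 0 < d) :
    ∃! p : ℝ × ℝ, 0 < p.1 ∧ 0 < p.2 ∧ p.1 + p.2 = d ∧
      m₁ * Real.sinh (2 * p.1) = m₂ * Real.sinh (2 * p.2) := by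
  have hsinh : 0 < sinh (2 * d) := sinh_pos_iff.2 (by positivity)
  obtain ⟨x, ⟨hx, hfx⟩, huniq⟩ := existsUnique_zero_of_strictMonoOn
    (f := fun x => m₁ * sinh (2 * x) - m₂ * sinh (2 * (d - x))) hd.le
    ((strictMono_mul_sinh_two_mul_sub d hm₁ hm₂.le).strictMonoOn _) (by fun_prop)
    (by simpa using mul_pos hm₂ hsinh) (by simpa using mul_pos hm₁ hsinh)
  refine ⟨(x, d - x), ⟨hx.1, sub_pos.2 hx.2, add_sub_cancel _ _, sub_eq_zero.1 hfx⟩, ?_⟩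
  rintro ⟨a, b⟩ ⟨ha, hb, rfl, heq⟩
  have hax : a = x := huniq a ⟨⟨ha, by simpa using hb⟩, by simp [heq]⟩
  subst hax
  simp
end

section
/- Let θ₁, θ₂ ∈ (0, π/2), let z₁ = cos θ₁ + i·sin θ₁ and z₂ = −cos θ₂ + i·sin θ₂ be points of ℍ, and let m₁, m₂ > 0. Set d₁ = dist(i, z₁) and d₂ = dist(i, z₂). Then dist(z₁, z₂) = d₁ + d₂ (so i lies on the geodesic segment joining z₁ and z₂), and m₁·sinh(2d₁) = m₂·sinh(2d₂) holds if and only if m₁·sin²θ₂·cos θ₁ = m₂·cos θ₂·sin²θ₁. In other words, the two masses are in canonical configuration if and only if their hyperbolic center of mass is the point i. -/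
/-!
The unit circle `re z ^ 2 + im z ^ 2 = 1` is the geodesic through `I` orthogonal to the imaginary
axis, and on it `cosh (dist I z) = 1 / im z` and `sinh (dist I z) = |re z| / im z`. The addition
formula for `cosh` then shows that `dist z w = dist I z + dist I w` for points of the circle on
opposite sides of the imaginary axis, and `sinh (2 d) = 2 sinh d cosh d = 2 cos θ / sin θ ^ 2`
turns the center-of-mass condition into the canonical-configuration equation.
-/

open Real

namespace UpperHalfPlane

variable {z w : ℍ}

theorem cosh_dist_I_of_re_sq_add_im_sq (hz : z.re ^ 2 + z.im ^ 2 = 1) :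
    cosh (dist I z) = 1 / z.im := by
  rw [cosh_dist', I_re, I_im, div_eq_div_iff (by positivity) z.im_ne_zero]
  linear_combination z.im * hz

theorem sinh_dist_I_of_re_sq_add_im_sq (hz : z.re ^ 2 + z.im ^ 2 = 1) :
    sinh (dist I z) = |z.re| / z.im := by
  have hsq : sinh (dist I z) ^ 2 = (|z.re| / z.im) ^ 2 := by
    rw [sinh_sq, cosh_dist_I_of_re_sq_add_im_sq hz, div_pow, div_pow, sq_abs]
    field_simp [z.im_ne_zero]
    linear_combination -hz
  exact (pow_left_inj₀ (sinh_nonneg_iff.mpr dist_nonneg)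
    (div_nonneg (abs_nonneg _) z.im_pos.le) two_ne_zero).mp hsq

theorem sinh_two_mul_dist_I_of_re_sq_add_im_sq (hz : z.re ^ 2 + z.im ^ 2 = 1) :
    sinh (2 * dist I z) = 2 * |z.re| / z.im ^ 2 := by
  rw [sinh_two_mul, sinh_dist_I_of_re_sq_add_im_sq hz, cosh_dist_I_of_re_sq_add_im_sq hz]
  ring

theorem dist_eq_dist_I_add_dist_I (hz : z.re ^ 2 + z.im ^ 2 = 1) (hw : w.re ^ 2 + w.im ^ 2 = 1)
    (hz₀ : 0 ≤ z.re) (hw₀ : w.re ≤ 0) : dist z w = dist I z + dist I w := by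
  refine cosh_injOn dist_nonneg (add_nonneg dist_nonneg dist_nonneg) ?_
  rw [cosh_add, cosh_dist', cosh_dist_I_of_re_sq_add_im_sq hz, cosh_dist_I_of_re_sq_add_im_sq hw,
    sinh_dist_I_of_re_sq_add_im_sq hz, sinh_dist_I_of_re_sq_add_im_sq hw, abs_of_nonneg hz₀,
    abs_of_nonpos hw₀]
  field_simp [z.im_ne_zero, w.im_ne_zero]
  linear_combination hz + hw

end UpperHalfPlane

theorem canonical_configuration_iff_center_of_mass_eq_I_general
    (θ₁ θ₂ : ℝ) (hθ₁ : θ₁ ∈ Set.Ioo 0 (π / 2)) (hθ₂ : θ₂ ∈ Set.Ioo 0 (π / 2))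
    (m₁ m₂ : ℝ)
    (z₁ z₂ : UpperHalfPlane)
    (hz₁ : (z₁ : ℂ) = ⟨Real.cos θ₁, Real.sin θ₁⟩)
    (hz₂ : (z₂ : ℂ) = ⟨-Real.cos θ₂, Real.sin θ₂⟩)
    (d₁ d₂ : ℝ) (hd₁ : d₁ = dist UpperHalfPlane.I z₁) (hd₂ : d₂ = dist UpperHalfPlane.I z₂) :
    dist z₁ z₂ = d₁ + d₂ ∧
      (m₁ * Real.sinh (2 * d₁) = m₂ * Real.sinh (2 * d₂) ↔
        m₁ * Real.sin θ₂ ^ 2 * Real.cos θ₁ = m₂ * Real.cos θ₂ * Real.sin θ₁ ^ 2) := by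
  have hre₁ : z₁.re = cos θ₁ := by rw [UpperHalfPlane.re, hz₁]
  have him₁ : z₁.im = sin θ₁ := by rw [UpperHalfPlane.im, hz₁]
  have hre₂ : z₂.re = -cos θ₂ := by rw [UpperHalfPlane.re, hz₂]
  have him₂ : z₂.im = sin θ₂ := by rw [UpperHalfPlane.im, hz₂]
  have hcircle₁ : z₁.re ^ 2 + z₁.im ^ 2 = 1 := by rw [hre₁, him₁, cos_sq_add_sin_sq]
  have hcircle₂ : z₂.re ^ 2 + z₂.im ^ 2 = 1 := by rw [hre₂, him₂, neg_sq, cos_sq_add_sin_sq]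
  have hcos₁ : 0 < cos θ₁ := cos_pos_of_mem_Ioo ⟨by linarith [hθ₁.1, pi_pos], hθ₁.2⟩
  have hcos₂ : 0 < cos θ₂ := cos_pos_of_mem_Ioo ⟨by linarith [hθ₂.1, pi_pos], hθ₂.2⟩
  have hsin₁ : 0 < sin θ₁ := him₁ ▸ z₁.im_pos
  have hsin₂ : 0 < sin θ₂ := him₂ ▸ z₂.im_pos
  subst hd₁ hd₂
  refine ⟨UpperHalfPlane.dist_eq_dist_I_add_dist_I hcircle₁ hcircle₂ (hre₁ ▸ hcos₁.le)
    (hre₂ ▸ neg_nonpos.mpr hcos₂.le), ?_⟩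
  rw [UpperHalfPlane.sinh_two_mul_dist_I_of_re_sq_add_im_sq hcircle₁,
    UpperHalfPlane.sinh_two_mul_dist_I_of_re_sq_add_im_sq hcircle₂, hre₁, him₁, hre₂, him₂,
    abs_of_pos hcos₁, abs_neg, abs_of_pos hcos₂]
  field_simp

/-- For points `z₁ = cos θ₁ + i sin θ₁` and `z₂ = -cos θ₂ + i sin θ₂`
of `ℍ` with `θ₁, θ₂ ∈ (0, π/2)` and masses `m₁, m₂ > 0`, setting `d₁ = dist(i, z₁)` and
`d₂ = dist(i, z₂)`, one has `dist(z₁, z₂) = d₁ + d₂` (so `i` lies on the geodesic segment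
joining the masses), and `m₁ sinh(2 d₁) = m₂ sinh(2 d₂)` holds iff
`m₁ sin²θ₂ cos θ₁ = m₂ cos θ₂ sin²θ₁`: the masses are in canonical configuration iff
their hyperbolic center of mass is `i`. -/
theorem canonical_configuration_iff_center_of_mass_eq_I
    (θ₁ θ₂ : ℝ) (hθ₁ : θ₁ ∈ Set.Ioo 0 (π / 2)) (hθ₂ : θ₂ ∈ Set.Ioo 0 (π / 2))
    (m₁ m₂ : ℝ) (hm₁ : 0 < m₁) (hm₂ : 0 < m₂)
    (z₁ z₂ : UpperHalfPlane)
    (hz₁ : (z₁ : ℂ) = ⟨Real.cos θ₁, Real.sin θ₁⟩)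
    (hz₂ : (z₂ : ℂ) = ⟨-Real.cos θ₂, Real.sin θ₂⟩)
    (d₁ d₂ : ℝ) (hd₁ : d₁ = dist UpperHalfPlane.I z₁) (hd₂ : d₂ = dist UpperHalfPlane.I z₂) :
    dist z₁ z₂ = d₁ + d₂ ∧
      (m₁ * Real.sinh (2 * d₁) = m₂ * Real.sinh (2 * d₂) ↔
        m₁ * Real.sin θ₂ ^ 2 * Real.cos θ₁ = m₂ * Real.cos θ₂ * Real.sin θ₁ ^ 2) :=
  canonical_configuration_iff_center_of_mass_eq_I_general θ₁ θ₂ hθ₁ hθ₂ m₁ m₂ z₁ z₂ hz₁ hz₂ d₁ d₂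
    hd₁ hd₂
end

section
/- Given masses m₁, m₂ > 0 and two distinct points z₁, z₂ of ℍ, there exist g ∈ SL(2,ℝ) and angles θ₁, θ₂ ∈ (0, π/2) such that g•z₁ = cos θ₁ + i·sin θ₁, g•z₂ = −cos θ₂ + i·sin θ₂, and m₁·sin²θ₂·cos θ₁ = m₂·cos θ₂·sin²θ₁. That is, any two masses in ℍ can be mapped by an orientation-preserving isometry to the canonical configuration. -/
/-!
Move `z₁` to `i` and then rotate about `i` (a rotation of the Cayley disc) so that `z₂` lands on
the geodesic `|z| = 1`, at signed distance `-d` from `i`, where `d = dist z₁ z₂`. The hyperbolic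
translations along this geodesic act by adding to the signed distance, and the point at signed
distance `t` is `tanh t + i / cosh t`. Writing `cos θ = tanh t`, `sin θ = 1 / cosh t`, the
balance condition for the points at signed distances `t` and `t - d` becomes
`m₁ sinh 2t = m₂ sinh 2(d - t)`, which has a root in `(0, d)` by the intermediate value theorem.
-/

open Real UpperHalfPlane
open scoped MatrixGroups

noncomputable def translationSL2 (t : ℝ) : SL(2, ℝ) :=
  ⟨!![cosh (t / 2), sinh (t / 2); sinh (t / 2), cosh (t / 2)], by
    simp [Matrix.det_fin_two, ← sq, cosh_sq]⟩

noncomputable def rotationSL2 (φ : ℝ) : SL(2, ℝ) :=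
  ⟨!![cos φ, sin φ; -sin φ, cos φ], by simp [Matrix.det_fin_two, ← sq]⟩

theorem coe_translationSL2 (t : ℝ) :
    (translationSL2 t : Matrix (Fin 2) (Fin 2) ℝ) =
      !![cosh (t / 2), sinh (t / 2); sinh (t / 2), cosh (t / 2)] := rfl

theorem coe_rotationSL2 (φ : ℝ) :
    (rotationSL2 φ : Matrix (Fin 2) (Fin 2) ℝ) = !![cos φ, sin φ; -sin φ, cos φ] := rfl

theorem translationSL2_add (s t : ℝ) :
    translationSL2 (s + t) = translationSL2 s * translationSL2 t := by
  ext i j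
  rw [Matrix.SpecialLinearGroup.coe_mul, coe_translationSL2, coe_translationSL2,
    coe_translationSL2]
  fin_cases i <;> fin_cases j <;>
    simp [Matrix.mul_apply, add_div, cosh_add, sinh_add] <;> ring

section MoebiusOfEntries

variable {g : SL(2, ℝ)} {a b c d : ℝ}

theorem denom_ne_zero_of_coe_eq (hg : (g : Matrix (Fin 2) (Fin 2) ℝ) = !![a, b; c, d]) (z : ℍ) :
    (c : ℂ) * z + d ≠ 0 := by
  have h : ((g 1 0 : ℝ) : ℂ) * z + (g 1 1 : ℝ) ≠ 0 := denom_ne_zero g z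
  simpa [hg] using h

theorem coe_smul_eq_iff_of_coe_eq (hg : (g : Matrix (Fin 2) (Fin 2) ℝ) = !![a, b; c, d])
    (z : ℍ) (w : ℂ) :
    ((g • z : ℍ) : ℂ) = w ↔ (a : ℂ) * z + b = w * ((c : ℂ) * z + d) := by
  rw [coe_specialLinearGroup_apply, div_eq_iff]
  · simp [hg]
  · simpa [hg] using denom_ne_zero_of_coe_eq hg z

end MoebiusOfEntries

theorem coe_translationSL2_smul_I (t : ℝ) :
    ((translationSL2 t • I : ℍ) : ℂ) = ⟨tanh t, (cosh t)⁻¹⟩ := by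
  rw [coe_smul_eq_iff_of_coe_eq (coe_translationSL2 t)]
  set u := t / 2
  have ht : t = 2 * u := by ring
  have hsq := cosh_sq u
  have hpos : 0 < cosh u ^ 2 + sinh u ^ 2 := by positivity
  rw [ht, tanh_eq_sinh_div_cosh, cosh_two_mul, sinh_two_mul, Complex.ext_iff]
  simp only [Complex.add_re, Complex.add_im, Complex.mul_re, Complex.mul_im, Complex.ofReal_re,
    Complex.ofReal_im, coe_I, Complex.I_re, Complex.I_im]
  constructor <;> field_simp
  · linear_combination (-sinh u) * hsq
  · linear_combination cosh u * hsq

theorem rotationSL2_smul_I (φ : ℝ) : rotationSL2 φ • I = I := by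
  ext1
  rw [coe_smul_eq_iff_of_coe_eq (coe_rotationSL2 φ)]
  apply Complex.ext <;> simp

noncomputable def cayley (z : ℂ) : ℂ := (z - Complex.I) / (z + Complex.I)

theorem coe_add_I_ne_zero (z : ℍ) : (z : ℂ) + Complex.I ≠ 0 := by
  intro h
  have him := congrArg Complex.im h
  simp only [Complex.add_im, coe_im, Complex.I_im, Complex.zero_im] at him
  linarith [z.im_pos]

theorem cayley_injective : Function.Injective fun z : ℍ ↦ cayley z := by
  intro z w h
  simp only [cayley] at h
  rw [div_eq_div_iff (coe_add_I_ne_zero z) (coe_add_I_ne_zero w)] at h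
  ext1
  linear_combination (-Complex.I / 2) * h + ((z : ℂ) - w) * Complex.I_sq

theorem cayley_rotationSL2_smul (φ : ℝ) (z : ℍ) :
    cayley ((rotationSL2 φ • z : ℍ) : ℂ) = Complex.exp (2 * φ * Complex.I) * cayley z := by
  set w : ℂ := ↑(rotationSL2 φ • z)
  have hw := (coe_smul_eq_iff_of_coe_eq (coe_rotationSL2 φ) z w).1 rfl
  have hD := denom_ne_zero_of_coe_eq (coe_rotationSL2 φ) z
  set c : ℂ := (cos φ : ℂ)
  set s : ℂ := (sin φ : ℂ)
  rw [Complex.ofReal_neg] at hw hD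
  have hexp : Complex.exp (2 * φ * Complex.I) = (c + s * Complex.I) ^ 2 := by
    rw [show 2 * (φ : ℂ) * Complex.I = φ * Complex.I + φ * Complex.I by ring, Complex.exp_add,
      Complex.exp_mul_I, ← Complex.ofReal_cos, ← Complex.ofReal_sin, sq]
  have hunit : (c + s * Complex.I) * (c - s * Complex.I) = 1 := by
    have hcs : c ^ 2 + s ^ 2 = 1 := by
      rw [← Complex.ofReal_pow, ← Complex.ofReal_pow, ← Complex.ofReal_add, cos_sq_add_sin_sq,
        Complex.ofReal_one]
    linear_combination hcs - s ^ 2 * Complex.I_sq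
  -- Times the denominator of the Möbius map, `w ∓ i` factor as `(c ± s i) (z ∓ i)`.
  have hN : c * z + s - Complex.I * (-(s * z) + c) = (c + s * Complex.I) * (z - Complex.I) := by
    linear_combination s * Complex.I_sq
  have hN' : c * z + s + Complex.I * (-(s * z) + c) = (c - s * Complex.I) * (z + Complex.I) := by
    linear_combination s * Complex.I_sq
  rw [cayley, cayley, hexp, mul_div_assoc',
    div_eq_div_iff (coe_add_I_ne_zero _) (coe_add_I_ne_zero z)]
  apply mul_left_cancel₀ hD
  linear_combination (-(z + Complex.I) + (c + s * Complex.I) ^ 2 * (z - Complex.I)) * hw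
    + (z + Complex.I) * hN - (c + s * Complex.I) ^ 2 * (z - Complex.I) * hN'
    - (z + Complex.I) * (z - Complex.I) * (c + s * Complex.I) * hunit

theorem cayley_translationSL2_smul_I (t : ℝ) :
    cayley ((translationSL2 t • I : ℍ) : ℂ) = -Complex.I * tanh (t / 2) := by
  set w : ℂ := ↑(translationSL2 t • I)
  have hw := (coe_smul_eq_iff_of_coe_eq (coe_translationSL2 t) I w).1 rfl
  have hD := denom_ne_zero_of_coe_eq (coe_translationSL2 t) I
  set C : ℂ := (cosh (t / 2) : ℂ)
  set S : ℂ := (sinh (t / 2) : ℂ)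
  have hC : C ≠ 0 := Complex.ofReal_ne_zero.2 (cosh_pos _).ne'
  rw [coe_I] at hw hD
  rw [cayley, tanh_eq_sinh_div_cosh, Complex.ofReal_div, mul_div_assoc',
    div_eq_div_iff (coe_add_I_ne_zero _) hC]
  apply mul_left_cancel₀ hD
  linear_combination (-(C + S * Complex.I)) * hw + (S * C + S ^ 2 * Complex.I) * Complex.I_sq

theorem norm_cayley (z : ℍ) : ‖cayley z‖ = tanh (dist I z / 2) := by
  rw [dist_comm, tanh_half_dist, cayley, norm_div, Complex.dist_eq, Complex.dist_eq]
  simp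

theorem exists_exp_mul_eq_I_mul_norm (ζ : ℂ) :
    ∃ φ : ℝ, Complex.exp (2 * φ * Complex.I) * ζ = Complex.I * ‖ζ‖ := by
  refine ⟨(π / 2 - ζ.arg) / 2, ?_⟩
  conv_lhs => arg 2; rw [← Complex.norm_mul_exp_arg_mul_I ζ]
  rw [mul_left_comm, ← Complex.exp_add, show 2 * (((π / 2 - ζ.arg) / 2 : ℝ) : ℂ) * Complex.I
    + ζ.arg * Complex.I = π / 2 * Complex.I by push_cast; ring, Complex.exp_pi_div_two_mul_I,
    mul_comm]

theorem exists_rotationSL2_smul_eq (w : ℍ) :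
    ∃ φ : ℝ, rotationSL2 φ • w = translationSL2 (-dist I w) • I := by
  obtain ⟨φ, hφ⟩ := exists_exp_mul_eq_I_mul_norm (cayley w)
  refine ⟨φ, cayley_injective ?_⟩
  dsimp only
  rw [cayley_rotationSL2_smul, cayley_translationSL2_smul_I, neg_div, tanh_neg, ← norm_cayley, hφ]
  push_cast
  ring

theorem exists_smul_eq_I_and_translationSL2_smul_I (z w : ℍ) :
    ∃ g : SL(2, ℝ), g • z = I ∧ g • w = translationSL2 (-dist z w) • I := by
  set A := z.toSL2R⁻¹
  have hA : A • z = I := inv_smul_eq_iff.2 (toSL2R_smul_I z).symm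
  obtain ⟨φ, hφ⟩ := exists_rotationSL2_smul_eq (A • w)
  refine ⟨rotationSL2 φ * A, by rw [mul_smul, hA, rotationSL2_smul_I], ?_⟩
  rw [mul_smul, hφ, ← hA, dist_smul]

theorem exists_mul_sinh_two_mul_eq {m₁ m₂ d : ℝ} (hm₁ : 0 < m₁) (hm₂ : 0 < m₂) (hd : 0 < d) :
    ∃ t ∈ Set.Ioo 0 d, m₁ * sinh (2 * t) = m₂ * sinh (2 * (d - t)) := by
  have hsinh : 0 < sinh (2 * d) := sinh_pos_iff.2 (by positivity)
  have hcont : ContinuousOn (fun t ↦ m₁ * sinh (2 * t) - m₂ * sinh (2 * (d - t)))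
      (Set.Icc 0 d) := by
    fun_prop
  have hsign : (0 : ℝ) ∈ Set.Ioo (m₁ * sinh (2 * 0) - m₂ * sinh (2 * (d - 0)))
      (m₁ * sinh (2 * d) - m₂ * sinh (2 * (d - d))) := by
    simp only [mul_zero, sub_zero, sub_self, sinh_zero]
    constructor <;> nlinarith
  obtain ⟨t, ht, h⟩ := intermediate_value_Ioo hd.le hcont hsign
  exact ⟨t, ht, sub_eq_zero.1 h⟩

theorem exists_angle_cos_eq_tanh {t : ℝ} (ht : 0 < t) :
    ∃ θ ∈ Set.Ioo 0 (π / 2), cos θ = tanh t ∧ sin θ = (cosh t)⁻¹ := by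
  have hcosh := cosh_pos t
  have htanh : 0 < tanh t := by
    rw [tanh_eq_sinh_div_cosh]
    exact div_pos (sinh_pos_iff.2 ht) hcosh
  refine ⟨arccos (tanh t), ⟨arccos_pos.2 (tanh_lt_one t), arccos_lt_pi_div_two.2 htanh⟩,
    cos_arccos (by linarith) (tanh_lt_one t).le, ?_⟩
  rw [sin_arccos, ← sqrt_sq (inv_pos.2 hcosh).le, tanh_eq_sinh_div_cosh]
  congr 1
  field_simp
  linear_combination cosh_sq t

/-- Any two point masses `m₁, m₂ > 0` at distinct points `z₁ ≠ z₂` of `ℍ`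
can be mapped by an element of `SL(2,ℝ)` (acting by Möbius transformations, i.e. by
orientation-preserving isometries) to the canonical configuration: `g • z₁ = cos θ₁ + i sin θ₁`,
`g • z₂ = -cos θ₂ + i sin θ₂` with `θ₁, θ₂ ∈ (0, π/2)` and
`m₁ sin²θ₂ cos θ₁ = m₂ cos θ₂ sin²θ₁`. -/
theorem exists_SL2_map_to_canonical_configuration
    (m₁ m₂ : ℝ) (hm₁ : 0 < m₁) (hm₂ : 0 < m₂)
    (z₁ z₂ : UpperHalfPlane) (hz : z₁ ≠ z₂) :
    ∃ (g : Matrix.SpecialLinearGroup (Fin 2) ℝ) (θ₁ θ₂ : ℝ),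
      θ₁ ∈ Set.Ioo 0 (π / 2) ∧ θ₂ ∈ Set.Ioo 0 (π / 2) ∧
      ((g • z₁ : UpperHalfPlane) : ℂ) = ⟨Real.cos θ₁, Real.sin θ₁⟩ ∧
      ((g • z₂ : UpperHalfPlane) : ℂ) = ⟨-Real.cos θ₂, Real.sin θ₂⟩ ∧
      m₁ * Real.sin θ₂ ^ 2 * Real.cos θ₁ = m₂ * Real.cos θ₂ * Real.sin θ₁ ^ 2 := by
  obtain ⟨g, hg₁, hg₂⟩ := exists_smul_eq_I_and_translationSL2_smul_I z₁ z₂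
  set d := dist z₁ z₂
  obtain ⟨t, ⟨ht₀, htd⟩, hbalance⟩ := exists_mul_sinh_two_mul_eq hm₁ hm₂ (dist_pos.2 hz)
  obtain ⟨θ₁, hθ₁, hcos₁, hsin₁⟩ := exists_angle_cos_eq_tanh ht₀
  obtain ⟨θ₂, hθ₂, hcos₂, hsin₂⟩ := exists_angle_cos_eq_tanh (sub_pos.2 htd)
  refine ⟨translationSL2 t * g, θ₁, θ₂, hθ₁, hθ₂, ?_, ?_, ?_⟩
  · rw [mul_smul, hg₁, coe_translationSL2_smul_I, hcos₁, hsin₁]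
  · rw [mul_smul, hg₂, ← mul_smul, ← translationSL2_add, show t + -d = -(d - t) by ring,
      coe_translationSL2_smul_I, tanh_neg, cosh_neg, hcos₂, hsin₂]
  · have hcosh₁ := cosh_pos t
    have hcosh₂ := cosh_pos (d - t)
    rw [sinh_two_mul, sinh_two_mul] at hbalance
    rw [hcos₁, hsin₁, hcos₂, hsin₂, tanh_eq_sinh_div_cosh, tanh_eq_sinh_div_cosh]
    field_simp
    linear_combination hbalance / 2
end

section
/- Let c₁, c₂ ∈ (0,1) and E, H, P ∈ ℝ. Then the 2×2 real matrix [[P·(E−P), −H·((1+c₁c₂)E − (1+2c₁c₂)P)], [−H·((1+c₁c₂)E − P), −P·(E−P)]] is the zero matrix if and only if (E = 0 and P = 0) or (H = 0 and P = 0) or (H = 0 and E = P). Consequently, the velocity ξ = E·ξ_e + H·ξ_h + P·ξ_p of a relative equilibrium in canonical configuration can never be a parabolic element (the case H = E = 0, P ≠ 0 is excluded). -/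
/-! The entry `(0,0)` forces `P = 0` or `E = P`, and the entry `(1,0)` forces `H = 0` or
`P = (1 + k) E` with `k = c₁ c₂`. Off the branch `H = 0`, these two linear conditions meet only at
`E = P = 0`, because `k ≠ 0` and `1 + k ≠ 0`. -/

theorem Matrix.of_fin_two_eq_zero_iff {α : Type*} [Zero α] {a b c d : α} :
    !![a, b; c, d] = 0 ↔ a = 0 ∧ b = 0 ∧ c = 0 ∧ d = 0 := by
  simp [← Matrix.ext_iff, Fin.forall_fin_two, and_assoc]

section CommutatorMatrix

variable {R : Type*} [CommRing R]

/-- `[J(p_q), ξ]` up to a nonvanishing factor, with `k = c₁ c₂`. -/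
def commutatorMatrix (k E H P : R) : Matrix (Fin 2) (Fin 2) R :=
  !![P * (E - P), -H * ((1 + k) * E - (1 + 2 * k) * P);
    -H * ((1 + k) * E - P), -(P * (E - P))]

variable [NoZeroDivisors R] {k E H P : R}

theorem solutions_of_commutator_entries (hk : k ≠ 0) (hk₁ : 1 + k ≠ 0)
    (h₀₀ : P * (E - P) = 0) (h₁₀ : H * ((1 + k) * E - P) = 0) :
    (E = 0 ∧ P = 0) ∨ (H = 0 ∧ P = 0) ∨ (H = 0 ∧ E = P) := by
  rcases mul_eq_zero.1 h₁₀ with hH | hPE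
  · rcases mul_eq_zero.1 h₀₀ with hP | hEP
    exacts [Or.inr (Or.inl ⟨hH, hP⟩), Or.inr (Or.inr ⟨hH, sub_eq_zero.1 hEP⟩)]
  · left
    rcases mul_eq_zero.1 h₀₀ with hP | hEP
    · subst hP
      rw [sub_zero] at hPE
      exact ⟨(mul_eq_zero.1 hPE).resolve_left hk₁, rfl⟩
    · obtain rfl := sub_eq_zero.1 hEP
      have hkE : k * E = 0 := by linear_combination hPE
      have hE := (mul_eq_zero.1 hkE).resolve_left hk
      exact ⟨hE, hE⟩

theorem commutatorMatrix_eq_zero_iff (hk : k ≠ 0) (hk₁ : 1 + k ≠ 0) :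
    commutatorMatrix k E H P = 0 ↔ (E = 0 ∧ P = 0) ∨ (H = 0 ∧ P = 0) ∨ (H = 0 ∧ E = P) := by
  rw [commutatorMatrix, Matrix.of_fin_two_eq_zero_iff]
  constructor
  · rintro ⟨h₀₀, -, h₁₀, -⟩
    exact solutions_of_commutator_entries hk hk₁ h₀₀ (by simpa using h₁₀)
  · rintro (⟨rfl, rfl⟩ | ⟨rfl, rfl⟩ | ⟨rfl, rfl⟩) <;> simp

end CommutatorMatrix

/-- For `c₁, c₂ ∈ (0,1)` (standing for `cos θ₁, cos θ₂` of a canonical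
configuration) and `E, H, P ∈ ℝ`, the commutator matrix
`!![P(E-P), -H((1+c₁c₂)E - (1+2c₁c₂)P); -H((1+c₁c₂)E - P), -P(E-P)]` vanishes iff
`(E = 0 ∧ P = 0) ∨ (H = 0 ∧ P = 0) ∨ (H = 0 ∧ E = P)`; consequently the velocity
`ξ = E ξ_e + H ξ_h + P ξ_p` of a relative equilibrium can never be parabolic: the case
`H = E = 0`, `P ≠ 0` is excluded. -/
theorem commutator_vanishing_excludes_parabolic
    (c₁ c₂ : ℝ) (hc₁ : c₁ ∈ Set.Ioo (0 : ℝ) 1) (hc₂ : c₂ ∈ Set.Ioo (0 : ℝ) 1)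
    (E H P : ℝ) :
    (!![P * (E - P), -H * ((1 + c₁ * c₂) * E - (1 + 2 * c₁ * c₂) * P);
        -H * ((1 + c₁ * c₂) * E - P), -(P * (E - P))] = (0 : Matrix (Fin 2) (Fin 2) ℝ) ↔
      (E = 0 ∧ P = 0) ∨ (H = 0 ∧ P = 0) ∨ (H = 0 ∧ E = P)) ∧
    (!![P * (E - P), -H * ((1 + c₁ * c₂) * E - (1 + 2 * c₁ * c₂) * P);
        -H * ((1 + c₁ * c₂) * E - P), -(P * (E - P))] = (0 : Matrix (Fin 2) (Fin 2) ℝ) →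
      H = 0 → E = 0 → P = 0) := by
  have hk : 0 < c₁ * c₂ := mul_pos hc₁.1 hc₂.1
  have key := commutatorMatrix_eq_zero_iff (E := E) (H := H) (P := P) hk.ne' (by positivity)
  rw [commutatorMatrix, ← mul_assoc] at key
  refine ⟨key, fun h _ hE => ?_⟩
  rcases key.1 h with ⟨-, hP⟩ | ⟨-, hP⟩ | ⟨-, hEP⟩
  exacts [hP, hP, hEP.symm.trans hE]
end

section
/- Let k, m₁, m₂ > 0, θ₁, θ₂ ∈ (0, π/2) with m₁·sin²θ₂·cos θ₁ = m₂·cos θ₂·sin²θ₁, and ω ∈ ℝ. Define on the open set Ω = {(x₁,y₁,x₂,y₂) ∈ ℝ⁴ : y₁ > 0, y₂ > 0, (x₁,y₁) ≠ (x₂,y₂)} the augmented potential V_e(x₁,y₁,x₂,y₂) = V(x₁,y₁,x₂,y₂) − (ω²/8)·Σ_{i=1,2} m_i·(x_i² + (y_i−1)²)·(x_i² + (y_i+1)²)/y_i². Then the point q = (cos θ₁, sin θ₁, −cos θ₂, sin θ₂) is a critical point of V_e (i.e. the Fréchet derivative of V_e at q is zero) if and only if ω² = k·m₁·sin²θ₁·sin⁴θ₂/((cos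 θ₁ + cos θ₂)²·cos θ₂). -/
/-!
Both bodies of `q` lie on the unit circle, the geodesic through the centre `i` of the elliptic
rotation. On it the radicand of `V` is the square `(2 (x₁ - x₂))²`, so all partial derivatives of
`V_e` at `q` are rational, and both the attraction and the centrifugal term are tangent to the
geodesic: each `y`-partial is `-x / y` times the corresponding `x`-partial. Hence `q` is critical
iff, for each body, the attraction balances the centrifugal term. For body 2 this is the stated
value of `ω²`; the canonical-configuration relation makes the balance for body 1 equivalent to it.
-/

open Real

theorem HasFDerivAt.eq_zero_iff_of_hasDerivAt_coord {𝕜 F : Type*} [NontriviallyNormedField 𝕜]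
    [NormedAddCommGroup F] [NormedSpace 𝕜 F] {f : 𝕜 × 𝕜 × 𝕜 × 𝕜 → F}
    {L : 𝕜 × 𝕜 × 𝕜 × 𝕜 →L[𝕜] F} {x₁ y₁ x₂ y₂ : 𝕜} {d₁ d₂ d₃ d₄ : F}
    (hf : HasFDerivAt f L (x₁, y₁, x₂, y₂))
    (h₁ : HasDerivAt (fun t => f (t, y₁, x₂, y₂)) d₁ x₁)
    (h₂ : HasDerivAt (fun t => f (x₁, t, x₂, y₂)) d₂ y₁)
    (h₃ : HasDerivAt (fun t => f (x₁, y₁, t, y₂)) d₃ x₂)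
    (h₄ : HasDerivAt (fun t => f (x₁, y₁, x₂, t)) d₄ y₂) :
    L = 0 ↔ d₁ = 0 ∧ d₂ = 0 ∧ d₃ = 0 ∧ d₄ = 0 := by
  have e₁ : L (1, 0, 0, 0) = d₁ := (hf.comp_hasDerivAt x₁ ((hasDerivAt_id x₁).prodMk
    ((hasDerivAt_const x₁ y₁).prodMk ((hasDerivAt_const x₁ x₂).prodMk
      (hasDerivAt_const x₁ y₂))))).unique h₁
  have e₂ : L (0, 1, 0, 0) = d₂ := (hf.comp_hasDerivAt y₁ ((hasDerivAt_const y₁ x₁).prodMk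
    ((hasDerivAt_id y₁).prodMk ((hasDerivAt_const y₁ x₂).prodMk
      (hasDerivAt_const y₁ y₂))))).unique h₂
  have e₃ : L (0, 0, 1, 0) = d₃ := (hf.comp_hasDerivAt x₂ ((hasDerivAt_const x₂ x₁).prodMk
    ((hasDerivAt_const x₂ y₁).prodMk ((hasDerivAt_id x₂).prodMk
      (hasDerivAt_const x₂ y₂))))).unique h₃
  have e₄ : L (0, 0, 0, 1) = d₄ := (hf.comp_hasDerivAt y₂ ((hasDerivAt_const y₂ x₁).prodMk
    ((hasDerivAt_const y₂ y₁).prodMk ((hasDerivAt_const y₂ x₂).prodMk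
      (hasDerivAt_id y₂))))).unique h₄
  refine ⟨?_, fun ⟨z₁, z₂, z₃, z₄⟩ => ContinuousLinearMap.ext fun ⟨a, b, c, d⟩ => ?_⟩
  · rintro rfl
    simp only [← e₁, ← e₂, ← e₃, ← e₄, zero_apply, and_self]
  · have hv : ((a, b, c, d) : 𝕜 × 𝕜 × 𝕜 × 𝕜) =
        a • (1, 0, 0, 0) + b • (0, 1, 0, 0) + c • (0, 0, 1, 0) + d • (0, 0, 0, 1) := by
      simp
    rw [hv]
    simp only [map_add, map_smul, e₁, e₂, e₃, e₄, z₁, z₂, z₃, z₄, smul_zero, add_zero, zero_apply]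

theorem HasDerivAt.div_sqrt_sq_sub {A c : ℝ → ℝ} {A' c' t r : ℝ} (hA : HasDerivAt A A' t)
    (hc : HasDerivAt c c' t) (hr : 0 < r) (hr2 : r ^ 2 = A t ^ 2 - c t) :
    HasDerivAt (fun s => A s / √(A s ^ 2 - c s)) ((A t * c' / 2 - c t * A') / r ^ 3) t := by
  have hs : √(A t ^ 2 - c t) = r := by rw [← hr2, sqrt_sq hr.le]
  have hD : HasDerivAt (fun s => √(A s ^ 2 - c s)) ((2 * A t ^ (2 - 1) * A' - c') / (2 * r)) t := by
    rw [← hs]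
    exact ((hA.fun_pow 2).fun_sub hc).sqrt (by rw [← hr2]; positivity)
  refine (hA.fun_div hD (by rw [hs]; positivity)).congr_deriv ?_
  rw [hs, pow_one]
  field_simp
  linear_combination 2 * A' * hr2

/-- `cothDist (x₁ - x₂) y₁ y₂` is `coth` of the hyperbolic distance between `(x₁, y₁)` and
`(x₂, y₂)`. -/
noncomputable def cothDist (u a b : ℝ) : ℝ :=
  (u ^ 2 + a ^ 2 + b ^ 2) / √((u ^ 2 + (a - b) ^ 2) * (u ^ 2 + (a + b) ^ 2))

/-- `4 sinh² d`, where `d` is the hyperbolic distance from `(x, y)` to `(0, 1)`. -/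
noncomputable def ellipticInertia (x y : ℝ) : ℝ :=
  (x ^ 2 + (y - 1) ^ 2) * (x ^ 2 + (y + 1) ^ 2) / y ^ 2

noncomputable def augmentedPotential (k m₁ m₂ ω : ℝ) (q : ℝ × ℝ × ℝ × ℝ) : ℝ :=
  -(k * m₁ * m₂) * cothDist (q.1 - q.2.2.1) q.2.1 q.2.2.2 -
    ω ^ 2 / 8 * (m₁ * ellipticInertia q.1 q.2.1 + m₂ * ellipticInertia q.2.2.1 q.2.2.2)

theorem cothDist_eq_div_sqrt (u a b : ℝ) :
    cothDist u a b =
      (u ^ 2 + a ^ 2 + b ^ 2) / √((u ^ 2 + a ^ 2 + b ^ 2) ^ 2 - 4 * a ^ 2 * b ^ 2) := by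
  rw [cothDist]
  ring_nf

section CothDist

variable {u a b r : ℝ}

theorem hasDerivAt_cothDist_fst (hr : 0 < r)
    (hr2 : r ^ 2 = (u ^ 2 + (a - b) ^ 2) * (u ^ 2 + (a + b) ^ 2)) :
    HasDerivAt (fun u => cothDist u a b) (-8 * u * a ^ 2 * b ^ 2 / r ^ 3) u := by
  simp only [cothDist_eq_div_sqrt]
  refine ((((hasDerivAt_id' u).fun_pow 2).add_const _).add_const _ |>.div_sqrt_sq_sub
    (hasDerivAt_const u (4 * a ^ 2 * b ^ 2)) hr (by rw [hr2]; ring)).congr_deriv ?_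
  ring

theorem hasDerivAt_cothDist_snd (hr : 0 < r)
    (hr2 : r ^ 2 = (u ^ 2 + (a - b) ^ 2) * (u ^ 2 + (a + b) ^ 2)) :
    HasDerivAt (fun a => cothDist u a b) (4 * a * b ^ 2 * (u ^ 2 - a ^ 2 + b ^ 2) / r ^ 3) a := by
  simp only [cothDist_eq_div_sqrt]
  refine ((((hasDerivAt_id' a).fun_pow 2).const_add _).add_const _ |>.div_sqrt_sq_sub
    ((((hasDerivAt_id' a).fun_pow 2).const_mul 4).mul_const (b ^ 2)) hr
    (by rw [hr2]; ring)).congr_deriv ?_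
  ring

theorem hasDerivAt_cothDist_thd (hr : 0 < r)
    (hr2 : r ^ 2 = (u ^ 2 + (a - b) ^ 2) * (u ^ 2 + (a + b) ^ 2)) :
    HasDerivAt (fun b => cothDist u a b) (4 * a ^ 2 * b * (u ^ 2 + a ^ 2 - b ^ 2) / r ^ 3) b := by
  simp only [cothDist_eq_div_sqrt]
  refine (((hasDerivAt_id' b).fun_pow 2).const_add _ |>.div_sqrt_sq_sub
    (((hasDerivAt_id' b).fun_pow 2).const_mul (4 * a ^ 2)) hr
    (by rw [hr2]; ring)).congr_deriv ?_
  ring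

end CothDist

theorem hasDerivAt_ellipticInertia_fst (x y : ℝ) :
    HasDerivAt (fun x => ellipticInertia x y) (4 * x * (x ^ 2 + y ^ 2 + 1) / y ^ 2) x := by
  refine (((((hasDerivAt_id' x).fun_pow 2).add_const _).fun_mul
    (((hasDerivAt_id' x).fun_pow 2).add_const _)).div_const (y ^ 2)).congr_deriv ?_
  ring

theorem hasDerivAt_ellipticInertia_snd (x : ℝ) {y : ℝ} (hy : y ≠ 0) :
    HasDerivAt (fun y => ellipticInertia x y)
      (2 * (x ^ 2 + y ^ 2 + 1) * (y ^ 2 - x ^ 2 - 1) / y ^ 3) y := by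
  refine (((((hasDerivAt_id' y).sub_const 1).fun_pow 2).const_add _).fun_mul
    ((((hasDerivAt_id' y).add_const 1).fun_pow 2).const_add _) |>.fun_div
    ((hasDerivAt_id' y).fun_pow 2) (by positivity)).congr_deriv ?_
  field_simp
  ring

theorem differentiableAt_augmentedPotential (k m₁ m₂ ω : ℝ) {x₁ y₁ x₂ y₂ : ℝ}
    (hD : 0 < ((x₁ - x₂) ^ 2 + (y₁ - y₂) ^ 2) * ((x₁ - x₂) ^ 2 + (y₁ + y₂) ^ 2))
    (hy₁ : y₁ ≠ 0) (hy₂ : y₂ ≠ 0) :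
    DifferentiableAt ℝ (augmentedPotential k m₁ m₂ ω) (x₁, y₁, x₂, y₂) := by
  unfold augmentedPotential cothDist ellipticInertia
  fun_prop (disch := simp [hD.ne', hy₁, hy₂, sqrt_ne_zero', hD])

theorem sq_dist_mul_sq_dist_conj_of_unit_circle {x₁ y₁ x₂ y₂ : ℝ} (h₁ : x₁ ^ 2 + y₁ ^ 2 = 1)
    (h₂ : x₂ ^ 2 + y₂ ^ 2 = 1) :
    (2 * (x₁ - x₂)) ^ 2 = ((x₁ - x₂) ^ 2 + (y₁ - y₂) ^ 2) * ((x₁ - x₂) ^ 2 + (y₁ + y₂) ^ 2) := by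
  rw [show ((x₁ - x₂) ^ 2 + (y₁ - y₂) ^ 2) * ((x₁ - x₂) ^ 2 + (y₁ + y₂) ^ 2)
      = ((x₁ - x₂) ^ 2 + y₁ ^ 2 + y₂ ^ 2) ^ 2 - 4 * y₁ ^ 2 * y₂ ^ 2 by ring,
    eq_sub_of_add_eq' h₁, eq_sub_of_add_eq' h₂]
  ring

section UnitCircle

variable {k m₁ m₂ ω x₁ y₁ x₂ y₂ : ℝ}

theorem hasDerivAt_augmentedPotential_x₁ (hx : x₂ < x₁) (h₁ : x₁ ^ 2 + y₁ ^ 2 = 1)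
    (h₂ : x₂ ^ 2 + y₂ ^ 2 = 1) :
    HasDerivAt (fun t => augmentedPotential k m₁ m₂ ω (t, y₁, x₂, y₂))
      (k * m₁ * m₂ * y₁ ^ 2 * y₂ ^ 2 / (x₁ - x₂) ^ 2 - ω ^ 2 * m₁ * x₁ / y₁ ^ 2) x₁ := by
  have hW := (hasDerivAt_cothDist_fst (a := y₁) (b := y₂) (by linarith : 0 < 2 * (x₁ - x₂))
    (sq_dist_mul_sq_dist_conj_of_unit_circle h₁ h₂)).comp_sub_const x₁ x₂
  simp only [augmentedPotential]
  refine ((hW.const_mul _).fun_sub ((((hasDerivAt_ellipticInertia_fst x₁ y₁).const_mul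
    m₁).add_const _).const_mul _)).congr_deriv ?_
  have : x₁ - x₂ ≠ 0 := by linarith
  rw [show x₁ ^ 2 + y₁ ^ 2 + 1 = 2 by linarith]
  field_simp
  ring

theorem hasDerivAt_augmentedPotential_y₁ (hx : x₂ < x₁) (hy₁ : y₁ ≠ 0)
    (h₁ : x₁ ^ 2 + y₁ ^ 2 = 1) (h₂ : x₂ ^ 2 + y₂ ^ 2 = 1) :
    HasDerivAt (fun t => augmentedPotential k m₁ m₂ ω (x₁, t, x₂, y₂))
      (-(x₁ / y₁) * (k * m₁ * m₂ * y₁ ^ 2 * y₂ ^ 2 / (x₁ - x₂) ^ 2 - ω ^ 2 * m₁ * x₁ / y₁ ^ 2))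
      y₁ := by
  have hW := hasDerivAt_cothDist_snd (by linarith : 0 < 2 * (x₁ - x₂))
    (sq_dist_mul_sq_dist_conj_of_unit_circle h₁ h₂)
  simp only [augmentedPotential]
  refine ((hW.const_mul _).fun_sub ((((hasDerivAt_ellipticInertia_snd x₁ hy₁).const_mul
    m₁).add_const _).const_mul _)).congr_deriv ?_
  have : x₁ - x₂ ≠ 0 := by linarith
  rw [show x₁ ^ 2 + y₁ ^ 2 + 1 = 2 by linarith, show y₁ ^ 2 - x₁ ^ 2 - 1 = -2 * x₁ ^ 2 by linarith,
    show (x₁ - x₂) ^ 2 - y₁ ^ 2 + y₂ ^ 2 = 2 * x₁ * (x₁ - x₂) by linear_combination h₂ - h₁]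
  field_simp
  ring

theorem hasDerivAt_augmentedPotential_x₂ (hx : x₂ < x₁) (h₁ : x₁ ^ 2 + y₁ ^ 2 = 1)
    (h₂ : x₂ ^ 2 + y₂ ^ 2 = 1) :
    HasDerivAt (fun t => augmentedPotential k m₁ m₂ ω (x₁, y₁, t, y₂))
      (-(k * m₁ * m₂ * y₁ ^ 2 * y₂ ^ 2 / (x₁ - x₂) ^ 2) - ω ^ 2 * m₂ * x₂ / y₂ ^ 2) x₂ := by
  have hW := (hasDerivAt_cothDist_fst (a := y₁) (b := y₂) (by linarith : 0 < 2 * (x₁ - x₂))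
    (sq_dist_mul_sq_dist_conj_of_unit_circle h₁ h₂)).comp_const_sub x₁ x₂
  simp only [augmentedPotential]
  refine ((hW.const_mul _).fun_sub ((((hasDerivAt_ellipticInertia_fst x₂ y₂).const_mul
    m₂).const_add _).const_mul _)).congr_deriv ?_
  have : x₁ - x₂ ≠ 0 := by linarith
  rw [show x₂ ^ 2 + y₂ ^ 2 + 1 = 2 by linarith]
  field_simp
  ring

theorem hasDerivAt_augmentedPotential_y₂ (hx : x₂ < x₁) (hy₂ : y₂ ≠ 0)
    (h₁ : x₁ ^ 2 + y₁ ^ 2 = 1) (h₂ : x₂ ^ 2 + y₂ ^ 2 = 1) :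
    HasDerivAt (fun t => augmentedPotential k m₁ m₂ ω (x₁, y₁, x₂, t))
      (-(x₂ / y₂) * (-(k * m₁ * m₂ * y₁ ^ 2 * y₂ ^ 2 / (x₁ - x₂) ^ 2) - ω ^ 2 * m₂ * x₂ / y₂ ^ 2))
      y₂ := by
  have hW := hasDerivAt_cothDist_thd (by linarith : 0 < 2 * (x₁ - x₂))
    (sq_dist_mul_sq_dist_conj_of_unit_circle h₁ h₂)
  simp only [augmentedPotential]
  refine ((hW.const_mul _).fun_sub ((((hasDerivAt_ellipticInertia_snd x₂ hy₂).const_mul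
    m₂).const_add _).const_mul _)).congr_deriv ?_
  have : x₁ - x₂ ≠ 0 := by linarith
  rw [show x₂ ^ 2 + y₂ ^ 2 + 1 = 2 by linarith, show y₂ ^ 2 - x₂ ^ 2 - 1 = -2 * x₂ ^ 2 by linarith,
    show (x₁ - x₂) ^ 2 + y₁ ^ 2 - y₂ ^ 2 = -2 * x₂ * (x₁ - x₂) by linear_combination h₁ - h₂]
  field_simp
  ring

theorem fderiv_augmentedPotential_eq_zero_iff (hx : x₂ < x₁) (hy₁ : y₁ ≠ 0) (hy₂ : y₂ ≠ 0)
    (h₁ : x₁ ^ 2 + y₁ ^ 2 = 1) (h₂ : x₂ ^ 2 + y₂ ^ 2 = 1) :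
    fderiv ℝ (augmentedPotential k m₁ m₂ ω) (x₁, y₁, x₂, y₂) = 0 ↔
      k * m₁ * m₂ * y₁ ^ 2 * y₂ ^ 2 / (x₁ - x₂) ^ 2 = ω ^ 2 * m₁ * x₁ / y₁ ^ 2 ∧
      -(k * m₁ * m₂ * y₁ ^ 2 * y₂ ^ 2 / (x₁ - x₂) ^ 2) = ω ^ 2 * m₂ * x₂ / y₂ ^ 2 := by
  have hD : 0 < ((x₁ - x₂) ^ 2 + (y₁ - y₂) ^ 2) * ((x₁ - x₂) ^ 2 + (y₁ + y₂) ^ 2) := by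
    rw [← sq_dist_mul_sq_dist_conj_of_unit_circle h₁ h₂]
    have := sub_pos.2 hx
    positivity
  rw [(differentiableAt_augmentedPotential k m₁ m₂ ω hD hy₁ hy₂).hasFDerivAt
    |>.eq_zero_iff_of_hasDerivAt_coord
    (hasDerivAt_augmentedPotential_x₁ hx h₁ h₂) (hasDerivAt_augmentedPotential_y₁ hx hy₁ h₁ h₂)
    (hasDerivAt_augmentedPotential_x₂ hx h₁ h₂) (hasDerivAt_augmentedPotential_y₂ hx hy₂ h₁ h₂)]
  simp only [sub_eq_zero]
  constructor
  · rintro ⟨e₁, -, e₃, -⟩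
    exact ⟨e₁, e₃⟩
  · rintro ⟨e₁, e₃⟩
    exact ⟨e₁, by rw [e₁, sub_self, mul_zero], e₃, by rw [e₃, sub_self, mul_zero]⟩

end UnitCircle

theorem cos_pos_and_sin_pos_of_mem_Ioo {θ : ℝ} (h : θ ∈ Set.Ioo 0 (π / 2)) :
    0 < cos θ ∧ 0 < sin θ :=
  ⟨cos_pos_of_mem_Ioo ⟨by linarith [h.1, pi_pos], h.2⟩,
    sin_pos_of_pos_of_lt_pi h.1 (by linarith [h.2, pi_pos])⟩

theorem elliptic_relative_equilibrium_condition_general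
    (k m₁ m₂ θ₁ θ₂ ω : ℝ) (hm₂ : 0 < m₂)
    (hθ₁ : θ₁ ∈ Set.Ioo 0 (π / 2)) (hθ₂ : θ₂ ∈ Set.Ioo 0 (π / 2))
    (hcan : m₁ * Real.sin θ₂ ^ 2 * Real.cos θ₁ = m₂ * Real.cos θ₂ * Real.sin θ₁ ^ 2)
    (V Ve : ℝ × ℝ × ℝ × ℝ → ℝ)
    (hV : ∀ x₁ y₁ x₂ y₂ : ℝ, V (x₁, y₁, x₂, y₂) =
      -(k * m₁ * m₂) * ((x₁ - x₂) ^ 2 + y₁ ^ 2 + y₂ ^ 2) /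
        Real.sqrt (((x₁ - x₂) ^ 2 + (y₁ - y₂) ^ 2) * ((x₁ - x₂) ^ 2 + (y₁ + y₂) ^ 2)))
    (hVe : ∀ x₁ y₁ x₂ y₂ : ℝ, Ve (x₁, y₁, x₂, y₂) = V (x₁, y₁, x₂, y₂) -
      ω ^ 2 / 8 * (m₁ * (x₁ ^ 2 + (y₁ - 1) ^ 2) * (x₁ ^ 2 + (y₁ + 1) ^ 2) / y₁ ^ 2 +
        m₂ * (x₂ ^ 2 + (y₂ - 1) ^ 2) * (x₂ ^ 2 + (y₂ + 1) ^ 2) / y₂ ^ 2)) :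
    fderiv ℝ Ve (Real.cos θ₁, Real.sin θ₁, -Real.cos θ₂, Real.sin θ₂) = 0 ↔
      ω ^ 2 = k * m₁ * Real.sin θ₁ ^ 2 * Real.sin θ₂ ^ 4 /
        ((Real.cos θ₁ + Real.cos θ₂) ^ 2 * Real.cos θ₂) := by
  obtain ⟨hc₁, hs₁⟩ := cos_pos_and_sin_pos_of_mem_Ioo hθ₁
  obtain ⟨hc₂, hs₂⟩ := cos_pos_and_sin_pos_of_mem_Ioo hθ₂
  have hVe_eq : Ve = augmentedPotential k m₁ m₂ ω := by
    funext ⟨x₁, y₁, x₂, y₂⟩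
    rw [hVe, hV, augmentedPotential, cothDist, ellipticInertia, ellipticInertia]
    ring
  rw [hVe_eq, fderiv_augmentedPotential_eq_zero_iff (by linarith) hs₁.ne' hs₂.ne'
    (cos_sq_add_sin_sq θ₁) (by rw [neg_sq, cos_sq_add_sin_sq]), sub_neg_eq_add]
  constructor
  · rintro ⟨-, h₂⟩
    field_simp at h₂ ⊢
    linear_combination h₂
  · intro hω
    refine ⟨?_, by rw [hω]; field_simp⟩
    rw [hω]
    field_simp
    linear_combination (-(k * m₁)) * hcan

/-- For masses `m₁, m₂ > 0`, gravitational constant `k > 0`, angles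
`θ₁, θ₂ ∈ (0, π/2)` in canonical configuration (`m₁ sin²θ₂ cos θ₁ = m₂ cos θ₂ sin²θ₁`),
the point `q = (cos θ₁, sin θ₁, -cos θ₂, sin θ₂)` is a critical point of the augmented
potential `V_e = V - (ω²/8) Σᵢ mᵢ (xᵢ² + (yᵢ-1)²)(xᵢ² + (yᵢ+1)²)/yᵢ²` (for the elliptic
generator `ξ = ω ξ_e`) iff `ω² = k m₁ sin²θ₁ sin⁴θ₂ / ((cos θ₁ + cos θ₂)² cos θ₂)`. -/
theorem elliptic_relative_equilibrium_condition
    (k m₁ m₂ θ₁ θ₂ ω : ℝ) (hk : 0 < k) (hm₁ : 0 < m₁) (hm₂ : 0 < m₂)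
    (hθ₁ : θ₁ ∈ Set.Ioo 0 (π / 2)) (hθ₂ : θ₂ ∈ Set.Ioo 0 (π / 2))
    (hcan : m₁ * Real.sin θ₂ ^ 2 * Real.cos θ₁ = m₂ * Real.cos θ₂ * Real.sin θ₁ ^ 2)
    (V Ve : ℝ × ℝ × ℝ × ℝ → ℝ)
    (hV : ∀ x₁ y₁ x₂ y₂ : ℝ, V (x₁, y₁, x₂, y₂) =
      -(k * m₁ * m₂) * ((x₁ - x₂) ^ 2 + y₁ ^ 2 + y₂ ^ 2) /
        Real.sqrt (((x₁ - x₂) ^ 2 + (y₁ - y₂) ^ 2) * ((x₁ - x₂) ^ 2 + (y₁ + y₂) ^ 2)))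
    (hVe : ∀ x₁ y₁ x₂ y₂ : ℝ, Ve (x₁, y₁, x₂, y₂) = V (x₁, y₁, x₂, y₂) -
      ω ^ 2 / 8 * (m₁ * (x₁ ^ 2 + (y₁ - 1) ^ 2) * (x₁ ^ 2 + (y₁ + 1) ^ 2) / y₁ ^ 2 +
        m₂ * (x₂ ^ 2 + (y₂ - 1) ^ 2) * (x₂ ^ 2 + (y₂ + 1) ^ 2) / y₂ ^ 2)) :
    fderiv ℝ Ve (Real.cos θ₁, Real.sin θ₁, -Real.cos θ₂, Real.sin θ₂) = 0 ↔
      ω ^ 2 = k * m₁ * Real.sin θ₁ ^ 2 * Real.sin θ₂ ^ 4 /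
        ((Real.cos θ₁ + Real.cos θ₂) ^ 2 * Real.cos θ₂) :=
  elliptic_relative_equilibrium_condition_general k m₁ m₂ θ₁ θ₂ ω hm₂ hθ₁ hθ₂ hcan V Ve hV hVe
end

section
/- For all d₁, d₂ > 0 the identity (sech²(d₁)·sech⁴(d₂))/((tanh(d₁) + tanh(d₂))²·tanh(d₂)) = 2/(sinh²(d₁ + d₂)·sinh(2d₂)) holds. (This shows the angular-velocity formula ω² = k·m₁·sin²θ₁·sin⁴θ₂/((cos θ₁+cos θ₂)²·cos θ₂), obtained in a canonical configuration, coincides with the intrinsic formula ω² = 2k·m₁/(sinh²(d)·sinh(2d₂)) with d = d₁ + d₂, under the substitutions sin θᵢ = sech(dᵢ), cos θᵢ = tanh(dᵢ).) -/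
open Real

/-! Both sides are rational in `cosh dᵢ`, `sinh d₂` and `sinh (d₁ + d₂)` once one uses
`tanh d₁ + tanh d₂ = sinh (d₁ + d₂) / (cosh d₁ cosh d₂)` and `sinh (2 d₂) = 2 sinh d₂ cosh d₂`;
each then equals `1 / (sinh² (d₁ + d₂) sinh d₂ cosh d₂)`. -/

theorem Real.tanh_add_tanh (x y : ℝ) :
    tanh x + tanh y = sinh (x + y) / (cosh x * cosh y) := by
  have := (cosh_pos x).ne'
  have := (cosh_pos y).ne'
  rw [tanh_eq_sinh_div_cosh, tanh_eq_sinh_div_cosh, sinh_add]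
  field_simp

theorem angular_velocity_intrinsic_identity_general
    (d₁ d₂ : ℝ) :
    (1 / Real.cosh d₁) ^ 2 * (1 / Real.cosh d₂) ^ 4 /
        ((Real.tanh d₁ + Real.tanh d₂) ^ 2 * Real.tanh d₂) =
      2 / (Real.sinh (d₁ + d₂) ^ 2 * Real.sinh (2 * d₂)) := by
  have := (cosh_pos d₁).ne'
  have := (cosh_pos d₂).ne'
  rw [tanh_add_tanh, tanh_eq_sinh_div_cosh, sinh_two_mul]
  field_simp

/-- For `d₁, d₂ > 0`,
`sech²(d₁) sech⁴(d₂) / ((tanh d₁ + tanh d₂)² tanh d₂) = 2 / (sinh²(d₁+d₂) sinh(2 d₂))`: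
the angular-velocity formula obtained in a canonical configuration coincides with the
intrinsic one under the substitutions `sin θᵢ = sech dᵢ`, `cos θᵢ = tanh dᵢ`. -/
theorem angular_velocity_intrinsic_identity
    (d₁ d₂ : ℝ) (hd₁ : 0 < d₁) (hd₂ : 0 < d₂) :
    (1 / Real.cosh d₁) ^ 2 * (1 / Real.cosh d₂) ^ 4 /
        ((Real.tanh d₁ + Real.tanh d₂) ^ 2 * Real.tanh d₂) =
      2 / (Real.sinh (d₁ + d₂) ^ 2 * Real.sinh (2 * d₂)) :=
  angular_velocity_intrinsic_identity_general d₁ d₂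
end

section
/- Let c > 0 and define v : (0,1) → ℝ by v(u) = (u² − 1 + √((u²−1)² + 4c²u²))/(2cu). Then for every u ∈ (0,1): (i) 0 < v(u) < 1; (ii) v(u) is the unique w ∈ (0,1) satisfying c = ((1−u²)/u)·(w/(1−w²)); (iii) v is strictly increasing on (0,1); (iv) v(u) → 0 as u → 0⁺ and v(u) → 1 as u → 1⁻. -/
/-!
With `t = (1 - u²)/(c u)` the condition reads `(1 - w²)/w = t`, i.e. `w² + t w = 1`. The roots of
this quadratic have product `-1`, so it has exactly one positive root `(√(t² + 4) - t)/2`, which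
is `v u`; it lies below `1` because `t > 0`. Both `t ↦ (√(t² + 4) - t)/2` and `u ↦ t` are strictly
decreasing, so `v` is strictly increasing; as `u → 0⁺` we have `t → ∞` and the root tends to `0`,
and as `u → 1⁻` we have `t → 0` and the root tends to `1`.
-/

open Real Filter Set Topology

noncomputable def posRoot (s : ℝ) : ℝ := (√(s ^ 2 + 4) - s) / 2

lemma abs_lt_sqrt_sq_add_four (s : ℝ) : |s| < √(s ^ 2 + 4) := by
  rw [← sqrt_sq_eq_abs]
  exact sqrt_lt_sqrt (sq_nonneg s) (by linarith)

lemma posRoot_eq_two_div (s : ℝ) : posRoot s = 2 / (√(s ^ 2 + 4) + s) := by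
  have hsq : √(s ^ 2 + 4) ^ 2 = s ^ 2 + 4 := sq_sqrt (by positivity)
  have hpos : 0 < √(s ^ 2 + 4) + s := by linarith [neg_abs_le s, abs_lt_sqrt_sq_add_four s]
  rw [posRoot, eq_div_iff hpos.ne']
  linear_combination hsq / 2

lemma posRoot_pos (s : ℝ) : 0 < posRoot s := by
  rw [posRoot]
  linarith [le_abs_self s, abs_lt_sqrt_sq_add_four s]

lemma posRoot_sq_add_mul (s : ℝ) : posRoot s ^ 2 + s * posRoot s = 1 := by
  have hsq : √(s ^ 2 + 4) ^ 2 = s ^ 2 + 4 := sq_sqrt (by positivity)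
  rw [posRoot]
  linear_combination hsq / 4

lemma eq_posRoot_iff {s w : ℝ} (hw : 0 < w) : w ^ 2 + s * w = 1 ↔ w = posRoot s := by
  refine ⟨fun h => ?_, fun h => h ▸ posRoot_sq_add_mul s⟩
  have hr := posRoot_sq_add_mul s
  -- `posRoot s * (posRoot s + s) = 1`, so the cofactor below is positive
  have hcof : 0 < w + posRoot s + s := by nlinarith [posRoot_pos s]
  have hfac : (w - posRoot s) * (w + posRoot s + s) = 0 := by linear_combination h - hr
  rcases mul_eq_zero.mp hfac with h | h <;> linarith

lemma posRoot_lt_one {s : ℝ} (hs : 0 < s) : posRoot s < 1 := by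
  nlinarith [posRoot_sq_add_mul s, posRoot_pos s]

lemma posRoot_strictAnti : StrictAnti posRoot := by
  intro s₁ s₂ hs
  by_contra! h
  -- `s = 1 / r - r` for `r = posRoot s`, and `r ↦ 1 / r - r` is decreasing on `(0, ∞)`
  have p₁ := posRoot_pos s₁
  have p₂ := posRoot_pos s₂
  nlinarith [posRoot_sq_add_mul s₁, posRoot_sq_add_mul s₂, mul_pos p₁ p₂,
    mul_pos (mul_pos p₁ p₂) (sub_pos.mpr hs)]

lemma continuous_posRoot : Continuous posRoot := by
  unfold posRoot
  fun_prop

lemma posRoot_zero : posRoot 0 = 1 := by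
  rw [posRoot, show (0 : ℝ) ^ 2 + 4 = 2 ^ 2 by norm_num, sqrt_sq zero_le_two]
  norm_num

lemma tendsto_posRoot_atTop : Tendsto posRoot atTop (𝓝 0) := by
  simp_rw [funext posRoot_eq_two_div]
  exact tendsto_const_nhds.div_atTop
    (tendsto_atTop_add_left_of_le _ 0 (fun _ => sqrt_nonneg _) tendsto_id)

lemma div_two_mul_eq_posRoot {a k : ℝ} (hk : 0 < k) :
    (-a + √(a ^ 2 + 4 * k ^ 2)) / (2 * k) = posRoot (a / k) := by
  have : a ^ 2 + 4 * k ^ 2 = k ^ 2 * ((a / k) ^ 2 + 4) := by field_simp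
  rw [this, sqrt_mul (sq_nonneg k), sqrt_sq hk.le, posRoot]
  field_simp
  ring

lemma eq_mul_div_one_sub_sq_iff {c u w : ℝ} (hc : 0 < c) (hu : 0 < u) (hw : w ^ 2 ≠ 1) :
    c = (1 - u ^ 2) / u * (w / (1 - w ^ 2)) ↔ w ^ 2 + (1 - u ^ 2) / (c * u) * w = 1 := by
  have : 1 - w ^ 2 ≠ 0 := sub_ne_zero.mpr hw.symm
  field_simp
  constructor <;> intro h <;> linear_combination -h

lemma strictAntiOn_one_sub_sq_div_mul {c : ℝ} (hc : 0 < c) :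
    StrictAntiOn (fun u => (1 - u ^ 2) / (c * u)) (Ioi 0) := by
  intro u₁ hu₁ u₂ hu₂ hu
  simp only [mem_Ioi] at hu₁ hu₂
  rw [div_lt_div_iff₀ (by positivity) (by positivity)]
  nlinarith [mul_pos hc (mul_pos (sub_pos.mpr hu) (add_pos (mul_pos hu₁ hu₂) one_pos))]

lemma tendsto_one_sub_sq_div_mul_nhdsGT_zero {c : ℝ} (hc : 0 < c) :
    Tendsto (fun u => (1 - u ^ 2) / (c * u)) (𝓝[>] 0) atTop := by
  have hlim : Tendsto (fun u : ℝ => (1 - u ^ 2) / c) (𝓝[>] 0) (𝓝 (1 / c)) := by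
    apply tendsto_nhdsWithin_of_tendsto_nhds
    have : ContinuousAt (fun u : ℝ => (1 - u ^ 2) / c) 0 := by fun_prop
    simpa using this.tendsto
  convert hlim.pos_mul_atTop (by positivity) tendsto_inv_nhdsGT_zero using 1
  funext u
  rw [div_mul_eq_div_div, div_eq_mul_inv]

lemma tendsto_one_sub_sq_div_mul_one {c : ℝ} (hc : 0 < c) :
    Tendsto (fun u => (1 - u ^ 2) / (c * u)) (𝓝 1) (𝓝 0) := by
  have : ContinuousAt (fun u : ℝ => (1 - u ^ 2) / (c * u)) 1 := by
    fun_prop (disch := positivity)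
  simpa using this.tendsto

/-- For a mass ratio `c > 0`, the function
`v(u) = (u² - 1 + √((u²-1)² + 4c²u²))/(2cu)` on `(0,1)` satisfies: (i) `0 < v(u) < 1`;
(ii) `v(u)` is the unique `w ∈ (0,1)` with `c = ((1-u²)/u)(w/(1-w²))`;
(iii) `v` is strictly increasing on `(0,1)`; (iv) `v(u) → 0` as `u → 0⁺` and
`v(u) → 1` as `u → 1⁻`. -/
theorem canonical_angle_function_properties
    (c : ℝ) (hc : 0 < c) (v : ℝ → ℝ)
    (hv : ∀ u ∈ Set.Ioo (0 : ℝ) 1,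
      v u = (u ^ 2 - 1 + Real.sqrt ((u ^ 2 - 1) ^ 2 + 4 * c ^ 2 * u ^ 2)) / (2 * c * u)) :
    (∀ u ∈ Set.Ioo (0 : ℝ) 1, v u ∈ Set.Ioo (0 : ℝ) 1) ∧
    (∀ u ∈ Set.Ioo (0 : ℝ) 1, ∀ w ∈ Set.Ioo (0 : ℝ) 1,
      (c = ((1 - u ^ 2) / u) * (w / (1 - w ^ 2)) ↔ w = v u)) ∧
    StrictMonoOn v (Set.Ioo (0 : ℝ) 1) ∧
    Tendsto v (nhdsWithin 0 (Set.Ioo (0 : ℝ) 1)) (nhds 0) ∧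
    Tendsto v (nhdsWithin 1 (Set.Ioo (0 : ℝ) 1)) (nhds 1) := by
  set t : ℝ → ℝ := fun u => (1 - u ^ 2) / (c * u)
  have hvt : ∀ u ∈ Ioo (0 : ℝ) 1, v u = posRoot (t u) := fun u hu => by
    rw [hv u hu, ← div_two_mul_eq_posRoot (mul_pos hc hu.1)]
    ring_nf
  have ht : ∀ u ∈ Ioo (0 : ℝ) 1, 0 < t u := fun u hu =>
    div_pos (by nlinarith [hu.1, hu.2]) (mul_pos hc hu.1)
  have hv_eventually : ∀ x, ∀ᶠ u in 𝓝[Ioo 0 1] x, posRoot (t u) = v u := fun _ =>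
    eventually_nhdsWithin_of_forall fun u hu => (hvt u hu).symm
  refine ⟨fun u hu => ?_, fun u hu w hw => ?_, fun u₁ hu₁ u₂ hu₂ hu => ?_, ?_, ?_⟩
  · rw [hvt u hu]
    exact ⟨posRoot_pos _, posRoot_lt_one (ht u hu)⟩
  · rw [eq_mul_div_one_sub_sq_iff hc hu.1 (by nlinarith [hw.1, hw.2]), eq_posRoot_iff hw.1,
      hvt u hu]
  · rw [hvt u₁ hu₁, hvt u₂ hu₂]
    exact posRoot_strictAnti (strictAntiOn_one_sub_sq_div_mul hc hu₁.1 hu₂.1 hu)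
  · refine (tendsto_posRoot_atTop.comp ?_).congr' (hv_eventually 0)
    exact (tendsto_one_sub_sq_div_mul_nhdsGT_zero hc).mono_left
      (nhdsWithin_mono _ Ioo_subset_Ioi_self)
  · refine ((continuous_posRoot.tendsto' 0 1 posRoot_zero).comp ?_).congr' (hv_eventually 1)
    exact (tendsto_one_sub_sq_div_mul_one hc).mono_left nhdsWithin_le_nhds
end

section
/- Let c > 0, let v(u) = (u² − 1 + √((u²−1)² + 4c²u²))/(2cu) for u ∈ (0,1), let F(u,v) = 1 − 3u²v² − u² − v², and define f(u) = F(u, v(u)). Then f is strictly decreasing on (0,1), f(u) → 1 as u → 0⁺, f(u) → −4 as u → 1⁻, and consequently f has a unique zero u₀ ∈ (0,1). -/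
/-!
The partner `v = v(u)` is the positive root of `c u v² - (u² - 1) v - c u = 0`, that is,
`c (v - 1/v) = u - 1/u`. Since `t ↦ t - 1/t` is strictly increasing on `(0, ∞)`, so is `v`, and
`F` decreases in both of its (positive) arguments, whence `f` is strictly decreasing.
Rationalizing, `v(u) = 2cu / (√((u²-1)² + 4c²u²) + 1 - u²)`, which is continuous on all of `ℝ`
with `v(0) = 0` and `v(1) = 1`; hence `f` extends continuously with `f(0) = 1`, `f(1) = -4`,
and the intermediate value theorem gives the zero.
-/

open Real Filter Set

lemma strictMonoOn_sub_inv : StrictMonoOn (fun t : ℝ => t - t⁻¹) (Ioi 0) := by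
  intro a ha b _ hab
  have : b⁻¹ < a⁻¹ := inv_strictAntiOn ha (mem_Ioi.2 (ha.out.trans hab)) hab
  simp only
  linarith

def stabilityF (u v : ℝ) : ℝ := 1 - 3 * u ^ 2 * v ^ 2 - u ^ 2 - v ^ 2

lemma stabilityF_lt_stabilityF {u u' v v' : ℝ} (hu : 0 ≤ u) (hu' : u < u') (hv : 0 ≤ v)
    (hv' : v < v') : stabilityF u' v' < stabilityF u v := by
  unfold stabilityF
  nlinarith [mul_lt_mul'' hu' hv' hu hv, mul_self_lt_mul_self hu hu', mul_self_lt_mul_self hv hv']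

/-- `cos θ₂` as a function of `u = cos θ₁`, in rationalized form so that it is continuous at
`u = 0`. -/
noncomputable def partnerCos (c u : ℝ) : ℝ :=
  2 * c * u / (√((u ^ 2 - 1) ^ 2 + 4 * c ^ 2 * u ^ 2) + 1 - u ^ 2)

noncomputable def stabilityFun (c u : ℝ) : ℝ := stabilityF u (partnerCos c u)

section

variable {c : ℝ}

lemma sqrt_disc_sq (c u : ℝ) :
    √((u ^ 2 - 1) ^ 2 + 4 * c ^ 2 * u ^ 2) ^ 2 = (u ^ 2 - 1) ^ 2 + 4 * c ^ 2 * u ^ 2 :=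
  sq_sqrt (by positivity)

lemma partnerCos_denom_pos (hc : c ≠ 0) (u : ℝ) :
    0 < √((u ^ 2 - 1) ^ 2 + 4 * c ^ 2 * u ^ 2) + 1 - u ^ 2 := by
  rcases eq_or_ne u 0 with rfl | hu
  · norm_num
  have : |u ^ 2 - 1| < √((u ^ 2 - 1) ^ 2 + 4 * c ^ 2 * u ^ 2) := by
    rw [← sqrt_sq_eq_abs]
    exact sqrt_lt_sqrt (sq_nonneg _) (by simp; positivity)
  linarith [le_abs_self (u ^ 2 - 1)]

lemma partnerCos_eq (hc : c ≠ 0) {u : ℝ} (hu : u ≠ 0) :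
    partnerCos c u = (u ^ 2 - 1 + √((u ^ 2 - 1) ^ 2 + 4 * c ^ 2 * u ^ 2)) / (2 * c * u) := by
  rw [partnerCos, div_eq_div_iff (partnerCos_denom_pos hc u).ne' (by positivity)]
  linear_combination -(sqrt_disc_sq c u)

lemma continuous_partnerCos (hc : c ≠ 0) : Continuous (partnerCos c) :=
  Continuous.div (by fun_prop) (by fun_prop) fun u => (partnerCos_denom_pos hc u).ne'

lemma partnerCos_pos (hc : 0 < c) {u : ℝ} (hu : 0 < u) : 0 < partnerCos c u :=
  div_pos (by positivity) (partnerCos_denom_pos hc.ne' u)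

lemma partnerCos_sub_inv (hc : c ≠ 0) {u : ℝ} (hu : u ≠ 0) :
    c * (partnerCos c u - (partnerCos c u)⁻¹) = u - u⁻¹ := by
  have hD := (partnerCos_denom_pos hc u).ne'
  have hS := sqrt_disc_sq c u
  rw [partnerCos, inv_div]
  generalize √((u ^ 2 - 1) ^ 2 + 4 * c ^ 2 * u ^ 2) = S at hD hS ⊢
  field_simp
  linear_combination -hS

lemma strictMonoOn_partnerCos (hc : 0 < c) : StrictMonoOn (partnerCos c) (Ioi 0) := by
  intro a ha b hb hab
  have key : c * (partnerCos c a - (partnerCos c a)⁻¹)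
      < c * (partnerCos c b - (partnerCos c b)⁻¹) := by
    rw [partnerCos_sub_inv hc.ne' ha.out.ne', partnerCos_sub_inv hc.ne' hb.out.ne']
    exact strictMonoOn_sub_inv ha hb hab
  exact (strictMonoOn_sub_inv.lt_iff_lt (partnerCos_pos hc ha) (partnerCos_pos hc hb)).1
    (lt_of_mul_lt_mul_left key hc.le)

lemma partnerCos_zero (c : ℝ) : partnerCos c 0 = 0 := by simp [partnerCos]

lemma partnerCos_one (hc : 0 < c) : partnerCos c 1 = 1 := by
  rw [partnerCos_eq hc.ne' one_ne_zero]
  have : √((1 ^ 2 - 1) ^ 2 + 4 * c ^ 2 * 1 ^ 2) = 2 * c := by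
    rw [show (1 ^ 2 - 1) ^ 2 + 4 * c ^ 2 * 1 ^ 2 = (2 * c) ^ 2 by ring, sqrt_sq (by positivity)]
  rw [this]
  field_simp
  ring

lemma strictAntiOn_stabilityFun (hc : 0 < c) : StrictAntiOn (stabilityFun c) (Ioi 0) :=
  fun _ ha _ _ hab => stabilityF_lt_stabilityF ha.out.le hab (partnerCos_pos hc ha).le
    (strictMonoOn_partnerCos hc ha ‹_› hab)

lemma continuous_stabilityFun (hc : c ≠ 0) : Continuous (stabilityFun c) := by
  have := continuous_partnerCos hc
  unfold stabilityFun stabilityF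
  fun_prop

lemma stabilityFun_zero (c : ℝ) : stabilityFun c 0 = 1 := by
  simp [stabilityFun, stabilityF, partnerCos_zero]

lemma stabilityFun_one (hc : 0 < c) : stabilityFun c 1 = -4 := by
  rw [stabilityFun, stabilityF, partnerCos_one hc]
  norm_num

end

/-- For a mass ratio `c > 0`, with
`v(u) = (u² - 1 + √((u²-1)² + 4c²u²))/(2cu)` and `F(u,v) = 1 - 3u²v² - u² - v²`, the
function `f(u) = F(u, v(u))` is strictly decreasing on `(0,1)`, tends to `1` as `u → 0⁺`
and to `-4` as `u → 1⁻`, and consequently has a unique zero `u₀ ∈ (0,1)`. -/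
theorem stability_function_strict_anti_and_unique_zero
    (c : ℝ) (hc : 0 < c) (v f : ℝ → ℝ)
    (hv : ∀ u ∈ Set.Ioo (0 : ℝ) 1,
      v u = (u ^ 2 - 1 + Real.sqrt ((u ^ 2 - 1) ^ 2 + 4 * c ^ 2 * u ^ 2)) / (2 * c * u))
    (hf : ∀ u ∈ Set.Ioo (0 : ℝ) 1,
      f u = 1 - 3 * u ^ 2 * (v u) ^ 2 - u ^ 2 - (v u) ^ 2) :
    StrictAntiOn f (Set.Ioo (0 : ℝ) 1) ∧
    Tendsto f (nhdsWithin 0 (Set.Ioo (0 : ℝ) 1)) (nhds 1) ∧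
    Tendsto f (nhdsWithin 1 (Set.Ioo (0 : ℝ) 1)) (nhds (-4)) ∧
    (∃! u₀ : ℝ, u₀ ∈ Set.Ioo (0 : ℝ) 1 ∧ f u₀ = 0) := by
  have hfg : EqOn (stabilityFun c) f (Ioo 0 1) := fun u hu => by
    rw [hf u hu, hv u hu, ← partnerCos_eq hc.ne' hu.1.ne']
    rfl
  have hanti : StrictAntiOn f (Ioo 0 1) :=
    ((strictAntiOn_stabilityFun hc).mono Ioo_subset_Ioi_self).congr hfg
  have hcont := continuous_stabilityFun hc.ne'
  have hlim : ∀ a, Tendsto f (nhdsWithin a (Ioo 0 1)) (nhds (stabilityFun c a)) := fun a =>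
    ((hcont.tendsto a).mono_left nhdsWithin_le_nhds).congr' hfg.eventuallyEq_nhdsWithin
  refine ⟨hanti, stabilityFun_zero c ▸ hlim 0, stabilityFun_one hc ▸ hlim 1, ?_⟩
  obtain ⟨u₀, hu₀, hzero⟩ := intermediate_value_Ioo' zero_le_one hcont.continuousOn
    (show (0 : ℝ) ∈ Ioo (stabilityFun c 1) (stabilityFun c 0) by
      rw [stabilityFun_zero, stabilityFun_one hc]; norm_num)
  rw [hfg hu₀] at hzero
  exact ⟨u₀, ⟨hu₀, hzero⟩, fun y hy => hanti.injOn hy.1 hu₀ (hy.2.trans hzero.symm)⟩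
end

section
/- Let c > 0, let v(u) = (u² − 1 + √((u²−1)² + 4c²u²))/(2cu) for u ∈ (0,1), let F(u,v) = 1 − 3u²v² − u² − v², and let u₀ ∈ (0,1) be the unique zero of u ↦ F(u, v(u)). Then the function g(u) = √(u·(1 − v(u)²)) is strictly increasing on (0, u₀] and strictly decreasing on [u₀, 1). (Since the norm of the momentum of the elliptic relative equilibrium is ‖μ(u)‖ = λ·√(u(1−v(u)²)) for a positive constant λ, the change of stability occurs at a critical value of the momentum.) -/
/-!
`v(u)` is the positive root of `c u v² - (u² - 1) v - c u = 0`, and differentiating this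
quadratic implicitly gives `d/du [u (1 - v²)] = F(u, v(u)) / √((u² - 1)² + 4c²u²)`, so `g`
increases where `F(u, v(u)) > 0` and decreases where it is negative. Rationalising the
numerator of `v` shows that `v` extends continuously to `[0, 1]` with `v(0) = 0` and
`v(1) = 1`; hence `F(u, v(u))` tends to `1` as `u → 0` and to `-4` as `u → 1`. Being continuous
with `u₀` as its only zero, it is positive on `(0, u₀)` and negative on `(u₀, 1)`.
-/

open Real

open Filter Set Topology

theorem IsPreconnected.lt_of_forall_ne {X α : Type*} [TopologicalSpace X] [LinearOrder α]
    [TopologicalSpace α] [OrderClosedTopology α] {s : Set X} {f : X → α} {b : α}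
    (hs : IsPreconnected s) (hf : ContinuousOn f s) (hfb : ∀ x ∈ s, f x ≠ b) {a : X}
    (ha : a ∈ s) (hfa : b < f a) {x : X} (hx : x ∈ s) : b < f x := by
  by_contra! hfx
  obtain ⟨y, hy, hfy⟩ := hs.intermediate_value hx ha hf ⟨hfx, hfa.le⟩
  exact hfb y hy hfy

namespace EllipticRelEq

def F (u v : ℝ) : ℝ := 1 - 3 * u ^ 2 * v ^ 2 - u ^ 2 - v ^ 2

def disc (c u : ℝ) : ℝ := (u ^ 2 - 1) ^ 2 + 4 * c ^ 2 * u ^ 2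

noncomputable def v (c u : ℝ) : ℝ := (u ^ 2 - 1 + √(disc c u)) / (2 * c * u)

noncomputable def vExt (c u : ℝ) : ℝ := 2 * c * u / (1 - u ^ 2 + √(disc c u))

-- `‖μ(u)‖` up to a positive constant factor
noncomputable def momentumNorm (c u : ℝ) : ℝ := √(u * (1 - v c u ^ 2))

variable {c u u₀ : ℝ}

lemma disc_pos (hc : 0 < c) (hu : 0 < u) : 0 < disc c u := by
  unfold disc; positivity

lemma sqrt_disc_eq (hc : 0 < c) (hu : 0 < u) :
    √(disc c u) = 2 * c * u * v c u - (u ^ 2 - 1) := by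
  unfold v
  field_simp
  ring

lemma one_sub_sq_add_sqrt_disc_pos (hc : c ≠ 0) (u : ℝ) : 0 < 1 - u ^ 2 + √(disc c u) := by
  rcases lt_or_ge (u ^ 2) 1 with hu | hu
  · linarith [sqrt_nonneg (disc c u)]
  · have hcu : 0 < (c * u) ^ 2 := by
      have hu0 : u ≠ 0 := by rintro rfl; norm_num at hu
      positivity
    have : u ^ 2 - 1 < √(disc c u) := (lt_sqrt (by linarith)).2 (by unfold disc; linarith)
    linarith

lemma continuous_vExt (hc : c ≠ 0) : Continuous (vExt c) :=
  Continuous.div (by fun_prop) (by unfold disc; fun_prop) fun u =>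
    (one_sub_sq_add_sqrt_disc_pos hc u).ne'

lemma v_eq_vExt (hc : 0 < c) (hu : 0 < u) : v c u = vExt c u := by
  have hS := sq_sqrt (disc_pos hc hu).le
  unfold v vExt
  rw [div_eq_div_iff (by positivity) (one_sub_sq_add_sqrt_disc_pos hc.ne' u).ne']
  unfold disc at *
  linear_combination hS

lemma vExt_zero : vExt c 0 = 0 := by simp [vExt]

lemma vExt_one (hc : 0 < c) : vExt c 1 = 1 := by
  have : √(disc c 1) = 2 * c := by
    rw [disc, show (1 ^ 2 - 1) ^ 2 + 4 * c ^ 2 * 1 ^ 2 = (2 * c) ^ 2 by ring]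
    exact sqrt_sq (by positivity)
  rw [vExt, this]
  field_simp
  ring

lemma v_pos (hc : 0 < c) (hu : 0 < u) : 0 < v c u := by
  rw [v_eq_vExt hc hu]
  exact div_pos (by positivity) (one_sub_sq_add_sqrt_disc_pos hc.ne' u)

lemma v_quadratic (hc : 0 < c) (hu : 0 < u) :
    c * u * v c u ^ 2 - (u ^ 2 - 1) * v c u - c * u = 0 := by
  have hS := sq_sqrt (disc_pos hc hu).le
  rw [sqrt_disc_eq hc hu] at hS
  unfold disc at hS
  apply mul_left_cancel₀ (by positivity : c * u ≠ 0)
  linear_combination hS / 4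

lemma one_sub_v_sq_pos (hc : 0 < c) (hu : 0 < u) (hu1 : u < 1) : 0 < 1 - v c u ^ 2 := by
  have : 0 < c * u * (1 - v c u ^ 2) := by
    rw [show c * u * (1 - v c u ^ 2) = (1 - u ^ 2) * v c u by
      linear_combination -v_quadratic hc hu]
    exact mul_pos (by nlinarith) (v_pos hc hu)
  exact pos_of_mul_pos_right this (by positivity)

lemma hasDerivAt_v (hc : 0 < c) (hu : 0 < u) :
    HasDerivAt (v c) ((c + 2 * u * v c u - c * v c u ^ 2) / √(disc c u)) u := by
  have hdiff : DifferentiableAt ℝ (v c) u := by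
    have : DifferentiableAt ℝ (fun x => √(disc c x)) u :=
      (by unfold disc; fun_prop : DifferentiableAt ℝ (disc c) u).sqrt (disc_pos hc hu).ne'
    exact (by fun_prop : DifferentiableAt ℝ (fun x => x ^ 2 - 1 + √(disc c x)) u).div
      (by fun_prop) (by positivity)
  set d := deriv (v c) u
  have hd : HasDerivAt (v c) d u := hdiff.hasDerivAt
  have hquad : HasDerivAt (fun x => c * x * v c x ^ 2 - (x ^ 2 - 1) * v c x - c * x)
      (c * v c u ^ 2 + c * u * (2 * v c u * d) - (2 * u * v c u + (u ^ 2 - 1) * d) - c) u := by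
    have hcx : HasDerivAt (fun x : ℝ => c * x) c u := by
      simpa using (hasDerivAt_id u).const_mul c
    have hx2 : HasDerivAt (fun x : ℝ => x ^ 2 - 1) (2 * u) u := by
      simpa using (hasDerivAt_pow 2 u).sub_const 1
    have hv2 : HasDerivAt (fun x => v c x ^ 2) (2 * v c u * d) u := by
      simpa using hd.fun_pow 2
    exact ((hcx.mul hv2).sub (hx2.mul hd)).sub hcx
  have hquad0 : HasDerivAt (fun x => c * x * v c x ^ 2 - (x ^ 2 - 1) * v c x - c * x) 0 u :=
    (hasDerivAt_const u 0).congr_of_eventuallyEq <| by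
      filter_upwards [Ioi_mem_nhds hu] with x hx using v_quadratic hc hx
  refine hd.congr_deriv ?_
  rw [eq_div_iff (sqrt_pos.2 (disc_pos hc hu)).ne', sqrt_disc_eq hc hu]
  linear_combination -(hquad0.unique hquad)

lemma hasDerivAt_sq_momentumNorm (hc : 0 < c) (hu : 0 < u) :
    HasDerivAt (fun x => x * (1 - v c x ^ 2)) (F u (v c u) / √(disc c u)) u := by
  refine ((hasDerivAt_id' u).fun_mul
    (((hasDerivAt_v hc hu).fun_pow 2).const_sub 1)).congr_deriv ?_
  have hS := (sqrt_pos.2 (disc_pos hc hu)).ne'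
  field_simp
  rw [sqrt_disc_eq hc hu, F]
  ring

lemma continuous_F_vExt (hc : c ≠ 0) : Continuous fun u => F u (vExt c u) := by
  have := continuous_vExt hc
  unfold F
  fun_prop

lemma continuousOn_F_v (hc : 0 < c) : ContinuousOn (fun u => F u (v c u)) (Ioi 0) :=
  (continuous_F_vExt hc.ne').continuousOn.congr fun u hu => by
    dsimp only
    rw [v_eq_vExt hc hu]

lemma eventually_F_v_pos (hc : 0 < c) : ∀ᶠ u in 𝓝[>] 0, 0 < F u (v c u) := by
  have hF0 : 0 < F 0 (vExt c 0) := by simp [F, vExt_zero]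
  have h := ((continuous_F_vExt hc.ne').tendsto 0).eventually (eventually_gt_nhds hF0)
  filter_upwards [nhdsWithin_le_nhds h, self_mem_nhdsWithin] with u hu (hu0 : 0 < u)
  rwa [v_eq_vExt hc hu0]

lemma eventually_F_v_neg (hc : 0 < c) : ∀ᶠ u in 𝓝[<] 1, F u (v c u) < 0 := by
  have hF1 : F 1 (vExt c 1) < 0 := by norm_num [F, vExt_one hc]
  have h := ((continuous_F_vExt hc.ne').tendsto 1).eventually (eventually_lt_nhds hF1)
  filter_upwards [nhdsWithin_le_nhds h, Ioo_mem_nhdsLT zero_lt_one] with u hu hu0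
  rwa [v_eq_vExt hc hu0.1]

lemma F_v_pos_of_lt (hc : 0 < c) (hu₀ : u₀ ∈ Ioo 0 1)
    (huniq : ∀ u ∈ Ioo (0 : ℝ) 1, F u (v c u) = 0 → u = u₀)
    (hu : u ∈ Ioo 0 u₀) : 0 < F u (v c u) := by
  obtain ⟨a, hFa, ha⟩ := ((eventually_F_v_pos hc).and (Ioo_mem_nhdsGT hu₀.1)).exists
  refine isPreconnected_Ioo.lt_of_forall_ne
    ((continuousOn_F_v hc).mono Ioo_subset_Ioi_self) (fun x hx hFx => ?_) ha hFa hu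
  exact hx.2.ne (huniq x ⟨hx.1, hx.2.trans hu₀.2⟩ hFx)

lemma F_v_neg_of_gt (hc : 0 < c) (hu₀ : u₀ ∈ Ioo 0 1)
    (huniq : ∀ u ∈ Ioo (0 : ℝ) 1, F u (v c u) = 0 → u = u₀)
    (hu : u ∈ Ioo u₀ 1) : F u (v c u) < 0 := by
  obtain ⟨a, hFa, ha⟩ := ((eventually_F_v_neg hc).and (Ioo_mem_nhdsLT hu₀.2)).exists
  refine neg_pos.1 <| isPreconnected_Ioo.lt_of_forall_ne (f := fun x => -F x (v c x))
    ((continuousOn_F_v hc).mono fun x hx => hu₀.1.trans hx.1).neg (fun x hx hFx => ?_) ha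
    (neg_pos.2 hFa) hu
  exact hx.1.ne' (huniq x ⟨hu₀.1.trans hx.1, hx.2⟩ (neg_eq_zero.1 hFx))

lemma strictMonoOn_momentumNorm (hc : 0 < c) (hu₀ : u₀ ∈ Ioo 0 1)
    (huniq : ∀ u ∈ Ioo (0 : ℝ) 1, F u (v c u) = 0 → u = u₀) :
    StrictMonoOn (momentumNorm c) (Ioc 0 u₀) := by
  have hmono : StrictMonoOn (fun x => x * (1 - v c x ^ 2)) (Ioc 0 u₀) := by
    refine strictMonoOn_of_deriv_pos (convex_Ioc 0 u₀)
      (fun x hx => (hasDerivAt_sq_momentumNorm hc hx.1).continuousAt.continuousWithinAt)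
      fun x hx => ?_
    rw [interior_Ioc] at hx
    rw [(hasDerivAt_sq_momentumNorm hc hx.1).deriv]
    exact div_pos (F_v_pos_of_lt hc hu₀ huniq hx) (sqrt_pos.2 (disc_pos hc hx.1))
  intro x hx y hy hxy
  exact sqrt_lt_sqrt (mul_pos hx.1 (one_sub_v_sq_pos hc hx.1 (hx.2.trans_lt hu₀.2))).le
    (hmono hx hy hxy)

lemma strictAntiOn_momentumNorm (hc : 0 < c) (hu₀ : u₀ ∈ Ioo 0 1)
    (huniq : ∀ u ∈ Ioo (0 : ℝ) 1, F u (v c u) = 0 → u = u₀) :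
    StrictAntiOn (momentumNorm c) (Ico u₀ 1) := by
  have hanti : StrictAntiOn (fun x => x * (1 - v c x ^ 2)) (Ico u₀ 1) := by
    refine strictAntiOn_of_deriv_neg (convex_Ico u₀ 1) (fun x hx =>
      (hasDerivAt_sq_momentumNorm hc (hu₀.1.trans_le hx.1)).continuousAt.continuousWithinAt)
      fun x hx => ?_
    rw [interior_Ico] at hx
    have hx0 : 0 < x := hu₀.1.trans hx.1
    rw [(hasDerivAt_sq_momentumNorm hc hx0).deriv]
    exact div_neg_of_neg_of_pos (F_v_neg_of_gt hc hu₀ huniq hx) (sqrt_pos.2 (disc_pos hc hx0))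
  intro x hx y hy hxy
  have hy0 : 0 < y := hu₀.1.trans_le (hx.1.trans hxy.le)
  exact sqrt_lt_sqrt (mul_pos hy0 (one_sub_v_sq_pos hc hy0 hy.2)).le (hanti hx hy hxy)

end EllipticRelEq

theorem momentum_norm_monotonicity_general
    (c : ℝ) (hc : 0 < c) (v g : ℝ → ℝ) (u₀ : ℝ)
    (hv : ∀ u ∈ Set.Ioo (0 : ℝ) 1,
      v u = (u ^ 2 - 1 + Real.sqrt ((u ^ 2 - 1) ^ 2 + 4 * c ^ 2 * u ^ 2)) / (2 * c * u))
    (hg : ∀ u ∈ Set.Ioo (0 : ℝ) 1, g u = Real.sqrt (u * (1 - (v u) ^ 2)))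
    (hu₀ : u₀ ∈ Set.Ioo (0 : ℝ) 1)
    (huniq : ∀ u ∈ Set.Ioo (0 : ℝ) 1,
      1 - 3 * u ^ 2 * (v u) ^ 2 - u ^ 2 - (v u) ^ 2 = 0 → u = u₀) :
    StrictMonoOn g (Set.Ioc 0 u₀) ∧ StrictAntiOn g (Set.Ico u₀ 1) := by
  have hv' : EqOn v (EllipticRelEq.v c) (Ioo 0 1) := fun u hu => hv u hu
  have hg' : EqOn (EllipticRelEq.momentumNorm c) g (Ioo 0 1) := fun u hu => by
    rw [hg u hu, hv' hu, EllipticRelEq.momentumNorm]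
  have huniq' : ∀ u ∈ Ioo (0 : ℝ) 1, EllipticRelEq.F u (EllipticRelEq.v c u) = 0 → u = u₀ :=
    fun u hu hF => huniq u hu (by rwa [hv' hu])
  exact ⟨(EllipticRelEq.strictMonoOn_momentumNorm hc hu₀ huniq').congr
      (hg'.mono (Ioc_subset_Ioo_right hu₀.2)),
    (EllipticRelEq.strictAntiOn_momentumNorm hc hu₀ huniq').congr
      (hg'.mono (Ico_subset_Ioo_left hu₀.1))⟩

/-- For a mass ratio `c > 0`, with
`v(u) = (u² - 1 + √((u²-1)² + 4c²u²))/(2cu)` on `(0,1)` and the unique zero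
`u₀ ∈ (0,1)` of `u ↦ F(u, v(u)) = 1 - 3u²v(u)² - u² - v(u)²`, the function
`g(u) = √(u(1 - v(u)²))` is strictly increasing on `(0, u₀]` and strictly decreasing on
`[u₀, 1)`: since `‖μ(u)‖ = λ g(u)` with `λ > 0`, the change of stability of the elliptic
relative equilibria occurs at a critical value of the momentum. -/
theorem momentum_norm_monotonicity
    (c : ℝ) (hc : 0 < c) (v g : ℝ → ℝ) (u₀ : ℝ)
    (hv : ∀ u ∈ Set.Ioo (0 : ℝ) 1,
      v u = (u ^ 2 - 1 + Real.sqrt ((u ^ 2 - 1) ^ 2 + 4 * c ^ 2 * u ^ 2)) / (2 * c * u))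
    (hg : ∀ u ∈ Set.Ioo (0 : ℝ) 1, g u = Real.sqrt (u * (1 - (v u) ^ 2)))
    (hu₀ : u₀ ∈ Set.Ioo (0 : ℝ) 1)
    (hzero : 1 - 3 * u₀ ^ 2 * (v u₀) ^ 2 - u₀ ^ 2 - (v u₀) ^ 2 = 0)
    (huniq : ∀ u ∈ Set.Ioo (0 : ℝ) 1,
      1 - 3 * u ^ 2 * (v u) ^ 2 - u ^ 2 - (v u) ^ 2 = 0 → u = u₀) :
    StrictMonoOn g (Set.Ioc 0 u₀) ∧ StrictAntiOn g (Set.Ico u₀ 1) :=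
  momentum_norm_monotonicity_general c hc v g u₀ hv hg hu₀ huniq
end

section
/- Let ω ∈ ℝ and θ ∈ (0, π/2), and define the curve γ : ℝ → ℍ by γ(t) = e^{ωt}·cos θ + i·e^{ωt}·sin θ and the curve c : ℝ → ℍ by c(t) = i·e^{ωt}. Then: (i) dist(γ(t), γ(s)) = dist(γ(t−s), γ(0)) for all t, s ∈ ℝ; (ii) dist(γ(t), γ(0))/|t| → |ω|/sin θ as t → 0 (t ≠ 0), i.e. each particle of the hyperbolic relative equilibrium moves with constant hyperbolic speed |ω|/sin θ = |ω|·cosh(d), where d = dist(i, cos θ + i sin θ); (iii) dist(c(t), c(s)) = |ω|·|t − s| for all t, s ∈ ℝ, i.e. the hyperbolic center of mass moves along a geodesic (the imaginary axis) with constant hyperbolic speed |ω|. -/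
/-!
Both curves are orbits of the dilations `z ↦ eᵃ z`, which are isometries of `ℍ`. Hence the
distance between two points of an orbit depends only on the time difference, and the formula for
`sinh (dist z w / 2)` gives `sinh (dist (eᵃ z) z / 2) = |sinh (a / 2)| ‖z‖ / Im z`. Differentiating
at `a = 0` yields the speed `|ω| ‖z‖ / Im z`, and on the unit circle `cosh (dist i z) = 1 / Im z`.
On the imaginary axis the formula collapses to `dist (eᵃ i) (eᵇ i) = |a - b|`.
-/

open Real Filter Topology

theorem Real.abs_arsinh (x : ℝ) : |arsinh x| = arsinh |x| := by
  rcases le_total 0 x with h | h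
  · rw [abs_of_nonneg h, abs_of_nonneg (arsinh_nonneg_iff.mpr h)]
  · rw [abs_of_nonpos h, abs_of_nonpos (arsinh_nonpos_iff.mpr h), ← arsinh_neg]

theorem tendsto_abs_div_abs_of_hasDerivAt {f : ℝ → ℝ} {f' : ℝ} (hf : HasDerivAt f f' 0)
    (h0 : f 0 = 0) : Tendsto (fun t => |f t| / |t|) (𝓝[≠] 0) (𝓝 |f'|) := by
  refine (hf.tendsto_slope.abs).congr fun t => ?_
  rw [slope_def_field, h0, sub_zero, sub_zero, abs_div]

namespace UpperHalfPlane

noncomputable def dilate (a : ℝ) (z : ℍ) : ℍ := (⟨exp a, exp_pos a⟩ : {x : ℝ // 0 < x}) • z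

@[simp]
theorem coe_dilate (a : ℝ) (z : ℍ) : (dilate a z : ℂ) = exp a * z := by
  simp [dilate, Complex.real_smul]

@[simp]
theorem dilate_im (a : ℝ) (z : ℍ) : (dilate a z).im = exp a * z.im := by
  simp [dilate]

@[simp]
theorem dilate_zero (z : ℍ) : dilate 0 z = z := by
  ext; simp

theorem dilate_add (a b : ℝ) (z : ℍ) : dilate (a + b) z = dilate a (dilate b z) := by
  ext; simp [exp_add, mul_assoc]

theorem dist_dilate_dilate (a b : ℝ) (z : ℍ) :
    dist (dilate a z) (dilate b z) = dist (dilate (a - b) z) z := by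
  calc dist (dilate a z) (dilate b z) = dist (dilate b (dilate (a - b) z)) (dilate b z) := by
        rw [← dilate_add, add_sub_cancel]
    _ = dist (dilate (a - b) z) z := (isometry_pos_mul _).dist_eq _ _

theorem sinh_half_dist_dilate_self (a : ℝ) (z : ℍ) :
    sinh (dist (dilate a z) z / 2) = |sinh (a / 2)| * ‖(z : ℂ)‖ / z.im := by
  have hexp : exp a = exp (a / 2) ^ 2 := by rw [← exp_nat_mul]; ring_nf
  have hsinh : exp a - 1 = 2 * exp (a / 2) * sinh (a / 2) := by
    rw [sinh_eq, hexp, exp_neg]; field_simp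
  have him : (dilate a z).im * z.im = (exp (a / 2) * z.im) ^ 2 := by
    rw [dilate_im, hexp]; ring
  rw [sinh_half_dist, him, sqrt_sq (by positivity), coe_dilate, dist_eq_norm, ← sub_one_mul,
    norm_mul, ← Complex.ofReal_one, ← Complex.ofReal_sub, Complex.norm_real,
    Real.norm_eq_abs, hsinh, abs_mul, abs_mul, abs_two, abs_of_pos (exp_pos _)]
  field_simp

theorem dist_dilate_self (a : ℝ) (z : ℍ) :
    dist (dilate a z) z = 2 * arsinh (|sinh (a / 2)| * ‖(z : ℂ)‖ / z.im) := by
  rw [← sinh_half_dist_dilate_self, arsinh_sinh]; ring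

theorem tendsto_dist_dilate_self_div_abs (ω : ℝ) (z : ℍ) :
    Tendsto (fun t => dist (dilate (ω * t) z) z / |t|) (𝓝[≠] 0) (𝓝 (|ω| * ‖(z : ℂ)‖ / z.im)) := by
  set k := ‖(z : ℂ)‖ / z.im
  have hk : 0 ≤ k := by positivity
  have hf : HasDerivAt (fun t => 2 * arsinh (sinh (ω * t / 2) * k)) (ω * k) 0 := by
    have hlin : HasDerivAt (fun t => ω * t / 2) (ω / 2) 0 :=
      ((hasDerivAt_id 0).const_mul ω).div_const 2 |>.congr_deriv (by simp)
    refine (((hasDerivAt_arsinh _).comp 0 (((hasDerivAt_sinh _).comp 0 hlin).mul_const k)).const_mul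
      2).congr_deriv ?_
    norm_num; ring
  convert tendsto_abs_div_abs_of_hasDerivAt hf (by simp) using 2 with t
  · rw [dist_dilate_self, mul_div_assoc |sinh _|, abs_mul, abs_two, abs_arsinh, abs_mul,
      abs_of_nonneg hk]
  · rw [abs_mul, abs_of_nonneg hk, mul_div_assoc]

theorem cosh_dist_I_of_norm_eq_one {z : ℍ} (hz : ‖(z : ℂ)‖ = 1) : cosh (dist I z) = 1 / z.im := by
  have hsq : z.re ^ 2 + z.im ^ 2 = 1 := by
    rw [← coe_re, ← coe_im, sq, sq, ← Complex.normSq_apply, ← Complex.sq_norm, hz, one_pow]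
  have := z.im_pos
  rw [cosh_dist', I_re, I_im]
  field_simp
  nlinarith

theorem dist_dilate_I_dilate_I (a b : ℝ) : dist (dilate a I) (dilate b I) = |a - b| := by
  rw [dist_dilate_dilate, dist_dilate_self, coe_I, Complex.norm_I, I_im, mul_one, div_one,
    abs_sinh, arsinh_sinh, abs_div, abs_two]
  ring

end UpperHalfPlane

open UpperHalfPlane

theorem hyperbolic_relative_equilibrium_intrinsic_description_general
    (ω θ : ℝ)
    (γ c : ℝ → UpperHalfPlane)
    (hγ : ∀ t : ℝ, (γ t : ℂ) = ⟨Real.exp (ω * t) * Real.cos θ, Real.exp (ω * t) * Real.sin θ⟩)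
    (hc : ∀ t : ℝ, (c t : ℂ) = ⟨0, Real.exp (ω * t)⟩)
    (z : UpperHalfPlane) (hz : (z : ℂ) = ⟨Real.cos θ, Real.sin θ⟩) :
    (∀ t s : ℝ, dist (γ t) (γ s) = dist (γ (t - s)) (γ 0)) ∧
    Tendsto (fun t : ℝ => dist (γ t) (γ 0) / |t|) (𝓝[≠] 0) (𝓝 (|ω| / Real.sin θ)) ∧
    |ω| / Real.sin θ = |ω| * Real.cosh (dist UpperHalfPlane.I z) ∧
    (∀ t s : ℝ, dist (c t) (c s) = |ω| * |t - s|) := by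
  have hz_norm : ‖(z : ℂ)‖ = 1 := by
    rw [hz, Complex.norm_eq_sqrt_sq_add_sq, cos_sq_add_sin_sq, sqrt_one]
  have hz_im : z.im = sin θ := by rw [← coe_im, hz]
  have hγ_eq : γ = fun t => dilate (ω * t) z := by
    funext t
    ext1
    rw [hγ, coe_dilate, hz]
    apply Complex.ext <;> simp only [Complex.re_ofReal_mul, Complex.im_ofReal_mul]
  have hc_eq : c = fun t => dilate (ω * t) I := by
    funext t
    ext1
    rw [hc, coe_dilate, coe_I]
    apply Complex.ext <;>
      simp only [Complex.re_ofReal_mul, Complex.im_ofReal_mul, Complex.I_re, Complex.I_im, mul_zero,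
        mul_one]
  subst hγ_eq hc_eq
  refine ⟨fun t s => ?_, ?_, ?_, fun t s => ?_⟩
  · simp only [dist_dilate_dilate, mul_sub, mul_zero, sub_zero]
  · simpa [hz_norm, hz_im] using tendsto_dist_dilate_self_div_abs ω z
  · rw [cosh_dist_I_of_norm_eq_one hz_norm, hz_im, mul_one_div]
  · rw [dist_dilate_I_dilate_I, ← mul_sub, abs_mul]

/-- For `ω ∈ ℝ`, `θ ∈ (0, π/2)`, the curves `γ(t) = e^{ωt}(cos θ + i sin θ)`
and `c(t) = i e^{ωt}` in `ℍ` (particle and hyperbolic center of mass of the hyperbolic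
relative equilibrium) satisfy: (i) `dist(γ(t), γ(s)) = dist(γ(t-s), γ(0))`;
(ii) `dist(γ(t), γ(0))/|t| → |ω|/sin θ` as `t → 0`, i.e. the particle moves with constant
hyperbolic speed `|ω|/sin θ = |ω| cosh d` with `d = dist(i, cos θ + i sin θ)`;
(iii) `dist(c(t), c(s)) = |ω||t - s|`, i.e. the center of mass moves along a geodesic with
constant hyperbolic speed `|ω|`. -/
theorem hyperbolic_relative_equilibrium_intrinsic_description
    (ω θ : ℝ) (hθ : θ ∈ Set.Ioo 0 (π / 2))
    (γ c : ℝ → UpperHalfPlane)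
    (hγ : ∀ t : ℝ, (γ t : ℂ) = ⟨Real.exp (ω * t) * Real.cos θ, Real.exp (ω * t) * Real.sin θ⟩)
    (hc : ∀ t : ℝ, (c t : ℂ) = ⟨0, Real.exp (ω * t)⟩)
    (z : UpperHalfPlane) (hz : (z : ℂ) = ⟨Real.cos θ, Real.sin θ⟩) :
    (∀ t s : ℝ, dist (γ t) (γ s) = dist (γ (t - s)) (γ 0)) ∧
    Tendsto (fun t : ℝ => dist (γ t) (γ 0) / |t|) (𝓝[≠] 0) (𝓝 (|ω| / Real.sin θ)) ∧
    |ω| / Real.sin θ = |ω| * Real.cosh (dist UpperHalfPlane.I z) ∧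
    (∀ t s : ℝ, dist (c t) (c s) = |ω| * |t - s|) :=
  hyperbolic_relative_equilibrium_intrinsic_description_general ω θ γ c hγ hc z hz
end

section
/- Let P be a locally compact metric space and G a compact topological group acting continuously on P. Let φ : ℝ → P → P be any family of maps (the flow: t ↦ φ t p is the solution with initial condition p), and let z : ℝ → P be a curve such that z(t) belongs to the G-orbit of z(0) for every t. Assume the stability property: for every open G-invariant set U containing the range of z there exists an open set W with range(z) ⊆ W ⊆ U such that φ t p ∈ U for every p ∈ W and every t ∈ ℝ. Then there exists an open set W containing the range of z such that for every p ∈ W the set {φ t p : t ∈ ℝ} is bounded. -/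
/-!
The orbit `K` of `z 0` is compact and contains the whole curve. Local compactness gives a
compact `K'` with `K ⊆ interior K'`, and compactness of `G` (a tube-lemma argument) makes the
set of points whose whole `G`-orbit lies in `interior K'` an open `G`-invariant neighbourhood
of `K`. Stability then provides an open `W ⊇ range z` whose solutions never leave it, hence stay
in the compact, so bounded, set `K'`.
-/

open Set Filter Topology

section CompactMonoidAction

variable {G P : Type*} [Monoid G] [TopologicalSpace G] [CompactSpace G]
  [TopologicalSpace P] [MulAction G P] [ContinuousSMul G P]

theorem MulAction.isCompact_orbit (p : P) : IsCompact (MulAction.orbit G p) :=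
  isCompact_range (continuous_id.smul continuous_const)

theorem isOpen_setOf_forall_smul_mem {V : Set P} (hV : IsOpen V) :
    IsOpen {p : P | ∀ g : G, g • p ∈ V} := by
  refine isOpen_iff_mem_nhds.mpr fun p hp => ?_
  have hnear : ∀ᶠ q in 𝓝 p, ∀ g ∈ (univ : Set G), g • q ∈ V :=
    isCompact_univ.eventually_forall_of_forall_eventually fun g _ =>
      (continuous_snd.smul continuous_fst).continuousAt.preimage_mem_nhds (hV.mem_nhds (hp g))
  exact hnear.mono fun q hq g => hq g (mem_univ g)

theorem IsCompact.exists_isOpen_smul_invariant_superset_subset_isCompact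
    [WeaklyLocallyCompactSpace P] {K : Set P} (hK : IsCompact K)
    (hKinv : ∀ g : G, ∀ p ∈ K, g • p ∈ K) :
    ∃ U K' : Set P, IsOpen U ∧ (∀ g : G, ∀ p ∈ U, g • p ∈ U) ∧ K ⊆ U ∧ U ⊆ K' ∧
      IsCompact K' := by
  obtain ⟨K', hK'c, hKK'⟩ := exists_compact_superset hK
  refine ⟨{p | ∀ g : G, g • p ∈ interior K'}, K', isOpen_setOf_forall_smul_mem isOpen_interior,
    fun g p hp h => ?_, fun p hp g => hKK' (hKinv g p hp),
    fun p hp => interior_subset (one_smul G p ▸ hp 1), hK'c⟩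
  simpa only [mul_smul] using hp (h * g)

end CompactMonoidAction

/-- Proposition A.1 of the paper. Let `P` be a locally compact metric
space and `G` a compact topological group acting continuously on `P`. If a curve
`z : ℝ → P` stays in the `G`-orbit of `z 0` and satisfies the `G`-stability property with
respect to a flow `φ` (for every `G`-invariant open `U ⊇ range z` there is an open `W`
with `range z ⊆ W ⊆ U` such that solutions starting in `W` stay in `U`), then there is an
open neighborhood `W` of `range z` from which all solutions are bounded. -/
theorem bounded_solutions_of_G_stable_relative_equilibrium
    {P : Type*} [MetricSpace P] [LocallyCompactSpace P]
    {G : Type*} [Group G] [TopologicalSpace G] [CompactSpace G]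
    [MulAction G P] [ContinuousSMul G P]
    (φ : ℝ → P → P) (z : ℝ → P)
    (horb : ∀ t : ℝ, z t ∈ MulAction.orbit G (z 0))
    (hstab : ∀ U : Set P, IsOpen U → (∀ (g : G), ∀ p ∈ U, g • p ∈ U) →
      Set.range z ⊆ U →
      ∃ W : Set P, IsOpen W ∧ Set.range z ⊆ W ∧ W ⊆ U ∧
        ∀ p ∈ W, ∀ t : ℝ, φ t p ∈ U) :
    ∃ W : Set P, IsOpen W ∧ Set.range z ⊆ W ∧
      ∀ p ∈ W, Bornology.IsBounded (Set.range fun t : ℝ => φ t p) := by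
  obtain ⟨U, K', hUo, hUinv, horbU, hUK', hK'c⟩ :=
    (MulAction.isCompact_orbit (G := G) (z 0)).exists_isOpen_smul_invariant_superset_subset_isCompact
      fun g _ hp => MulAction.mem_orbit_of_mem_orbit g hp
  obtain ⟨W, hWo, hzW, -, hWφ⟩ :=
    hstab U hUo hUinv (range_subset_iff.mpr fun t => horbU (horb t))
  refine ⟨W, hWo, hzW, fun p hp => hK'c.isBounded.subset ?_⟩
  exact range_subset_iff.mpr fun t => hUK' (hWφ p hp t)
end
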